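/- arXiv:2305.07142 — 15 statements merged into one kernel-verified Lean document; each statement's English description precedes it below -/
import Mathlib

section
/- Let s ≥ 1, t ≥ 1 and λ ≥ 0 be natural numbers and set θ = t·s + λ. Then the map (i, l) ↦ (s−1) + s·i + θ·l is injective on {0,…,t−1} × {0,…,t−1}; i.e., the t² important powers of the AGE code product C_A(x)·C_B(x) are pairwise distinct. -/
/-!
Writing `θ = t * s + λ`, the exponent is `(s - 1) + (s * i + θ * l)` with `s * i < s * t ≤ θ`,
so `l` and `s * i` are the quotient and remainder of `s * i + θ * l` modulo `θ`, and `i` is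
recovered from `s * i` because `s ≠ 0`.
-/

theorem Nat.eq_and_eq_of_add_mul_eq_add_mul {n a b c d : ℕ} (ha : a < n) (hc : c < n)
    (h : a + n * b = c + n * d) : a = c ∧ b = d := by
  have hn : 0 < n := Nat.zero_lt_of_lt ha
  obtain ⟨hdiv, hmod⟩ := (Nat.div_mod_unique hn).2 ⟨h.symm, hc⟩
  obtain ⟨hdiv', hmod'⟩ := (Nat.div_mod_unique hn).2 ⟨rfl, ha⟩
  exact ⟨hmod'.symm.trans hmod, hdiv'.symm.trans hdiv⟩

theorem age_important_powers_distinct_general (s t lam : ℕ) (hs : 1 ≤ s) :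
    Set.InjOn (fun p : ℕ × ℕ => (s - 1) + s * p.1 + (t * s + lam) * p.2)
      {p : ℕ × ℕ | p.1 < t ∧ p.2 < t} := by
  rintro ⟨i, l⟩ ⟨hi, -⟩ ⟨i', l'⟩ ⟨hi', -⟩ h
  dsimp only at hi hi' h
  have hlt_gap : ∀ {j}, j < t → s * j < t * s + lam := fun hj => by nlinarith
  obtain ⟨hsi, hl⟩ := Nat.eq_and_eq_of_add_mul_eq_add_mul (b := l) (d := l')
    (hlt_gap hi) (hlt_gap hi') (by omega)
  rw [Nat.eq_of_mul_eq_mul_left hs hsi, hl]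

/-- For s ≥ 1, t ≥ 1, λ ≥ 0 and θ = t·s + λ, the map
(i, l) ↦ (s−1) + s·i + θ·l is injective on {0,…,t−1} × {0,…,t−1}:
the t² important powers of the AGE code product C_A(x)·C_B(x) are
pairwise distinct. -/
theorem age_important_powers_distinct (s t lam : ℕ) (hs : 1 ≤ s) (ht : 1 ≤ t) :
    Set.InjOn (fun p : ℕ × ℕ => (s - 1) + s * p.1 + (t * s + lam) * p.2)
      {p : ℕ × ℕ | p.1 < t ∧ p.2 < t} :=
  age_important_powers_distinct_general s t lam hs
end

section
/- Let s ≥ 1, t ≥ 1 and λ ≥ 0 be natural numbers and set θ = t·s + λ. Then the set of important powers P₁ = {(s−1) + s·i + θ·l : 0 ≤ i,l ≤ t−1} is disjoint from the set of garbage powers P₂ = {j + s·i + (s−1−k) + θ·l : 0 ≤ i,l ≤ t−1, 0 ≤ j,k ≤ s−1, j ≠ k}. Hence Y = A^T B is decodable from C_A(x)·C_B(x) for AGE codes. -/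
/-! Adding `k` to both sides turns a coincidence of an important and a garbage power into
`k + s·i + θ·l = j + s·i' + θ·l'`. Since `k + s·i < t·s ≤ θ`, these are mixed-radix expansions
with digits of radices `s`, `t` and weight `θ`, so the lowest digits agree: `k = j`. -/

theorem Nat.eq_of_add_mul_eq_add_mul {b x y q r : ℕ} (hx : x < b) (hy : y < b)
    (h : x + b * q = y + b * r) : x = y := by
  simpa [Nat.add_mul_mod_self_left, Nat.mod_eq_of_lt hx, Nat.mod_eq_of_lt hy]
    using congrArg (· % b) h

theorem Nat.eq_of_mixed_radix_eq {s t θ j k i i' l l' : ℕ} (hj : j < s) (hk : k < s)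
    (hi : i < t) (hi' : i' < t) (hθ : s * t ≤ θ)
    (h : j + s * i + θ * l = k + s * i' + θ * l') : j = k :=
  have hlow : j + s * i = k + s * i' :=
    Nat.eq_of_add_mul_eq_add_mul (Nat.add_mul_lt_mul_of_lt_of_lt hj hi |>.trans_le hθ)
      (Nat.add_mul_lt_mul_of_lt_of_lt hk hi' |>.trans_le hθ) h
  Nat.eq_of_add_mul_eq_add_mul hj hk hlow

theorem age_important_garbage_disjoint_general (s t lam : ℕ) :
    Disjoint
      {n : ℕ | ∃ i l, i < t ∧ l < t ∧ n = (s - 1) + s * i + (t * s + lam) * l}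
      {n : ℕ | ∃ i l j k, i < t ∧ l < t ∧ j < s ∧ k < s ∧ j ≠ k ∧
        n = j + s * i + (s - 1 - k) + (t * s + lam) * l} := by
  rw [Set.disjoint_left]
  rintro n ⟨i, l, hi, -, rfl⟩ ⟨i', l', j, k, hi', -, hj, hk, hjk, hn⟩
  have hθ : s * t ≤ t * s + lam := by rw [Nat.mul_comm]; exact Nat.le_add_right _ _
  have hshift : k + s * i + (t * s + lam) * l = j + s * i' + (t * s + lam) * l' := by omega
  exact hjk (Nat.eq_of_mixed_radix_eq hk hj hi hi' hθ hshift).symm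

/-- For s ≥ 1, t ≥ 1, λ ≥ 0 and θ = t·s + λ, the set of
important powers P₁ = {(s−1) + s·i + θ·l : 0 ≤ i,l ≤ t−1} is disjoint from
the set of garbage powers
P₂ = {j + s·i + (s−1−k) + θ·l : 0 ≤ i,l ≤ t−1, 0 ≤ j,k ≤ s−1, j ≠ k};
hence Y = A^T B is decodable from C_A(x)·C_B(x) for AGE codes. -/
theorem age_important_garbage_disjoint (s t lam : ℕ) (hs : 1 ≤ s) (ht : 1 ≤ t) :
    Disjoint
      {n : ℕ | ∃ i l, i < t ∧ l < t ∧ n = (s - 1) + s * i + (t * s + lam) * l}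
      {n : ℕ | ∃ i l j k, i < t ∧ l < t ∧ j < s ∧ k < s ∧ j ≠ k ∧
        n = j + s * i + (s - 1 - k) + (t * s + lam) * l} :=
  age_important_garbage_disjoint_general s t lam
end

section
/- Let s, t ≥ 2 and z ≥ 1 be natural numbers with 2z ≤ t·s − 2t + 1, and set θ' = t·(2s−1). Define the finite sets of naturals P_CA = {i + t·j : 0 ≤ i ≤ t−1, 0 ≤ j ≤ s−1}, P_CB = {t·(s−1−k) + θ'·l : 0 ≤ k ≤ s−1, 0 ≤ l ≤ t−1}, P_SA = {t·s + u : 0 ≤ u ≤ z−1}, and P_SB = {t·s + v : 0 ≤ v ≤ z−1}. Then for every 0 ≤ i ≤ t−1 and 0 ≤ l ≤ t−1, the important power i + t·(s−1) + θ'·l belongs to none of the sumsets P_SA + P_CB, P_SA + P_SB, and P_SB + P_CA. -/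
open Pointwise

/-!
An important power is `c + θ' * l` with `c = i + t * (s - 1) < t * s`. Every element of the three
sumsets is `b + θ' * m` with `c < b < c + θ'`: the offset `t * s` of the secret terms pushes `b`
above `c`, and `2 * z ≤ t * s - 2 * t + 1` keeps it below `c + θ'`. As `0 < b - c < θ'`, the two
lie in different residue classes mod `θ'`.
-/

theorem add_mul_ne_add_mul_of_lt_of_lt_add {θ a b : ℕ} (l m : ℕ) (hab : a < b)
    (hba : b < a + θ) : b + θ * m ≠ a + θ * l := by
  intro h
  rcases le_or_gt l m with hlm | hml
  · have := Nat.mul_le_mul_left θ hlm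
    omega
  · have := Nat.mul_le_mul_left θ (Nat.succ_le_of_lt hml)
    rw [Nat.mul_succ] at this
    omega

theorem add_mul_notMem_of_forall_mem_eq_add_mul {θ a : ℕ} {S : Set ℕ} (l : ℕ)
    (hS : ∀ n ∈ S, ∃ b m, a < b ∧ b < a + θ ∧ n = b + θ * m) : a + θ * l ∉ S := by
  intro hmem
  obtain ⟨b, m, hab, hba, hn⟩ := hS _ hmem
  exact add_mul_ne_add_mul_of_lt_of_lt_add l m hab hba hn.symm

theorem polydot_conditions_small_z_general (s t z : ℕ) (hzb : 2 * z ≤ t * s - 2 * t + 1) :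
    ∀ i l, i < t → l < t →
      i + t * (s - 1) + (t * (2 * s - 1)) * l ∉
        ({n : ℕ | ∃ u, u < z ∧ n = t * s + u} +
         {n : ℕ | ∃ k l', k < s ∧ l' < t ∧ n = t * (s - 1 - k) + (t * (2 * s - 1)) * l'}) ∧
      i + t * (s - 1) + (t * (2 * s - 1)) * l ∉
        ({n : ℕ | ∃ u, u < z ∧ n = t * s + u} +
         {n : ℕ | ∃ v, v < z ∧ n = t * s + v}) ∧
      i + t * (s - 1) + (t * (2 * s - 1)) * l ∉
        ({n : ℕ | ∃ v, v < z ∧ n = t * s + v} +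
         {n : ℕ | ∃ i' j, i' < t ∧ j < s ∧ n = i' + t * j}) := by
  intro i l hi _
  have hc : t * (s - 1) = t * s - t := Nat.mul_sub_one t s
  have hθ : t * (2 * s - 1) = 2 * (t * s) - t := by rw [Nat.mul_sub_one, mul_left_comm]
  refine ⟨?_, ?_, ?_⟩ <;> apply add_mul_notMem_of_forall_mem_eq_add_mul
  · rintro _ ⟨_, ⟨u, hu, rfl⟩, _, ⟨k, l', -, -, rfl⟩, rfl⟩
    have hk : t * (s - 1 - k) ≤ t * (s - 1) := Nat.mul_le_mul_left t (Nat.sub_le _ _)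
    exact ⟨t * s + u + t * (s - 1 - k), l', by omega, by omega, (add_assoc ..).symm⟩
  · rintro _ ⟨_, ⟨u, hu, rfl⟩, _, ⟨v, hv, rfl⟩, rfl⟩
    exact ⟨t * s + u + (t * s + v), 0, by omega, by omega, by simp⟩
  · rintro _ ⟨_, ⟨v, hv, rfl⟩, _, ⟨i', j, hi', hj, rfl⟩, rfl⟩
    have hj' : t * j ≤ t * (s - 1) := Nat.mul_le_mul_left t (by omega)
    exact ⟨t * s + v + (i' + t * j), 0, by omega, by omega, by simp⟩

/-- PolyDot-CMPC privacy conditions C1–C3 in the branch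
z ≤ ts−t and 2z ≤ ts−2t+1 (polynomials F_{A_2} and F_{B_3}). -/
theorem polydot_conditions_small_z (s t z : ℕ) (hs : 2 ≤ s) (ht : 2 ≤ t)
    (hz : 1 ≤ z) (hzb : 2 * z ≤ t * s - 2 * t + 1) :
    ∀ i l, i < t → l < t →
      i + t * (s - 1) + (t * (2 * s - 1)) * l ∉
        ({n : ℕ | ∃ u, u < z ∧ n = t * s + u} +
         {n : ℕ | ∃ k l', k < s ∧ l' < t ∧ n = t * (s - 1 - k) + (t * (2 * s - 1)) * l'}) ∧
      i + t * (s - 1) + (t * (2 * s - 1)) * l ∉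
        ({n : ℕ | ∃ u, u < z ∧ n = t * s + u} +
         {n : ℕ | ∃ v, v < z ∧ n = t * s + v}) ∧
      i + t * (s - 1) + (t * (2 * s - 1)) * l ∉
        ({n : ℕ | ∃ v, v < z ∧ n = t * s + v} +
         {n : ℕ | ∃ i' j, i' < t ∧ j < s ∧ n = i' + t * j}) :=
  polydot_conditions_small_z_general s t z hzb
end

section
/- Let s, t ≥ 2 and z > t·(s−1) be natural numbers, set θ' = t·(2s−1) and p = min(⌊(z−1)/(t·(s−1))⌋, t−1). Define P_CA = {i + t·j : 0 ≤ i ≤ t−1, 0 ≤ j ≤ s−1}, P_CB = {t·(s−1−k) + θ'·l : 0 ≤ k ≤ s−1, 0 ≤ l ≤ t−1}, P_SA = (⋃_{l=0}^{p−1} {t·s + θ'·l + w : 0 ≤ w ≤ t·(s−1)−1}) ∪ {t·s + θ'·p + u : 0 ≤ u ≤ z−1−p·t·(s−1)}, and P_SB = {t·s + θ'·(t−1) + r : 0 ≤ r ≤ z−1}. Then for every 0 ≤ i ≤ t−1 and 0 ≤ l ≤ t−1, the important power i + t·(s−1) + θ'·l belongs to none of the sumsets P_SA + P_CB, P_SA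 + P_SB, and P_SB + P_CA. -/
/-!
Write `M = t(s-1)`, `T = ts = t + M` and `θ' = T + M`. An important power is `θ'·l + c` with
residue `c = i + M ∈ [M, T)`, and it is smaller than `T + θ'·(t-1)`. Every element of `P_SB`
is at least `T + θ'·(t-1)`, which settles C2 and C3. For C1, an element of `P_SA` either has
the shape `T + θ'·l' + w` with `w < M`, or (only when `p = t - 1`) is again at least
`T + θ'·(t-1)`; in the first case adding `t(s-1-k) + θ'·l''` gives `θ'·N + d` with
`d ∈ [T, T + 2M) = [T, θ' + M)`, and no residue in `[M, T)` can be written that way.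
-/

open Pointwise

theorem Nat.mul_add_ne_mul_add_of_lt {θ c d : ℕ} (hcd : c < d) (hdc : d < θ + c) (l N : ℕ) :
    θ * l + c ≠ θ * N + d := by
  intro h
  have hNl : N < l := by
    by_contra! hlN
    have := Nat.mul_le_mul_left θ hlN
    omega
  have := Nat.mul_le_mul_left θ hNl
  rw [Nat.mul_add_one] at this
  omega

theorem Nat.lt_of_le_sub_div_mul {n M u : ℕ} (hM : 0 < M) (hu : u ≤ n - n / M * M) : u < M := by
  rw [Nat.mul_comm, ← Nat.mod_eq_sub_mul_div] at hu
  exact hu.trans_lt (Nat.mod_lt n hM)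

theorem Set.notMem_add_of_lt_right {α : Type*} [AddCommMonoid α] [PartialOrder α]
    [CanonicallyOrderedAdd α] {X Y : Set α} {e : α} (h : ∀ b ∈ Y, e < b) : e ∉ X + Y := by
  rintro ⟨a, -, b, hb, hab⟩
  exact (h b hb).not_ge (hab ▸ le_add_self)

namespace PolyDot

theorem mul_eq_add_mul_sub_one {s : ℕ} (hs : 1 ≤ s) (t : ℕ) : t * s = t + t * (s - 1) := by
  rw [Nat.add_comm, ← Nat.mul_add_one, Nat.sub_add_cancel hs]

theorem mul_two_mul_sub_one (s t : ℕ) : t * (2 * s - 1) = t * s + t * (s - 1) := by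
  rw [← Nat.mul_add]
  congr 1
  omega

/-- The parameter `p` of the paper. -/
def fullSecretBlocks (s t z : ℕ) : ℕ := min ((z - 1) / (t * (s - 1))) (t - 1)

def supportCA (s t : ℕ) : Set ℕ := {n | ∃ i' j, i' < t ∧ j < s ∧ n = i' + t * j}

def supportCB (s t : ℕ) : Set ℕ :=
  {n | ∃ k l', k < s ∧ l' < t ∧ n = t * (s - 1 - k) + (t * (2 * s - 1)) * l'}

def supportSA (s t z : ℕ) : Set ℕ :=
  {n | ∃ l' w, l' < fullSecretBlocks s t z ∧ w < t * (s - 1) ∧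
      n = t * s + (t * (2 * s - 1)) * l' + w} ∪
  {n | ∃ u, u ≤ z - 1 - fullSecretBlocks s t z * (t * (s - 1)) ∧
      n = t * s + (t * (2 * s - 1)) * fullSecretBlocks s t z + u}

def supportSB (s t z : ℕ) : Set ℕ := {n | ∃ r, r < z ∧ n = t * s + (t * (2 * s - 1)) * (t - 1) + r}

def importantPower (s t i l : ℕ) : ℕ := i + t * (s - 1) + (t * (2 * s - 1)) * l

variable {s t z i l : ℕ}

theorem importantPower_lt (hs : 1 ≤ s) (hi : i < t) (hl : l < t) :
    importantPower s t i l < t * s + (t * (2 * s - 1)) * (t - 1) := by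
  have := Nat.mul_le_mul_left (t * (2 * s - 1)) (Nat.le_sub_one_of_lt hl)
  rw [importantPower, mul_eq_add_mul_sub_one hs t]
  linarith

theorem le_of_mem_supportSB {n : ℕ} (hn : n ∈ supportSB s t z) :
    t * s + (t * (2 * s - 1)) * (t - 1) ≤ n := by
  obtain ⟨r, -, rfl⟩ := hn
  exact Nat.le_add_right _ _

theorem mem_supportSA_cases (hM : 0 < t * (s - 1)) {a : ℕ} (ha : a ∈ supportSA s t z) :
    (∃ l' w, w < t * (s - 1) ∧ a = t * s + (t * (2 * s - 1)) * l' + w) ∨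
      t * s + (t * (2 * s - 1)) * (t - 1) ≤ a := by
  rcases ha with ⟨l', w, -, hw, rfl⟩ | ⟨u, hu, rfl⟩
  · exact .inl ⟨l', w, hw, rfl⟩
  rcases min_choice ((z - 1) / (t * (s - 1))) (t - 1) with hp | hp <;>
    rw [fullSecretBlocks, hp] at hu ⊢
  · exact .inl ⟨_, u, Nat.lt_of_le_sub_div_mul hM hu, rfl⟩
  · exact .inr (Nat.le_add_right _ _)

theorem importantPower_notMem_supportSA_add_supportCB (hs : 2 ≤ s) (hi : i < t) (hl : l < t) :
    importantPower s t i l ∉ supportSA s t z + supportCB s t := by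
  have hM : 0 < t * (s - 1) := Nat.mul_pos (by omega) (by omega)
  have hT := mul_eq_add_mul_sub_one (by omega : 1 ≤ s) t
  have hθ := mul_two_mul_sub_one s t
  intro h
  obtain ⟨a, ha, b, ⟨k, l'', -, -, rfl⟩, hab⟩ := Set.mem_add.mp h
  have hD : t * (s - 1 - k) ≤ t * (s - 1) := Nat.mul_le_mul_left t (Nat.sub_le _ _)
  rcases mem_supportSA_cases hM ha with ⟨l', w, hw, rfl⟩ | hbig
  · refine Nat.mul_add_ne_mul_add_of_lt (θ := t * (2 * s - 1)) (c := i + t * (s - 1))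
      (d := t * s + w + t * (s - 1 - k)) (by omega) (by linarith) l (l' + l'') ?_
    rw [importantPower] at hab
    rw [Nat.mul_add]
    linarith
  · exact (importantPower_lt (by omega) hi hl).not_ge (hab ▸ hbig.trans (Nat.le_add_right _ _))

end PolyDot

open PolyDot

theorem polydot_conditions_large_z_general (s t z : ℕ) (hs : 2 ≤ s) :
    ∀ i l, i < t → l < t →
      i + t * (s - 1) + (t * (2 * s - 1)) * l ∉
        (({n : ℕ | ∃ l' w, l' < min ((z - 1) / (t * (s - 1))) (t - 1) ∧ w < t * (s - 1) ∧
              n = t * s + (t * (2 * s - 1)) * l' + w} ∪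
          {n : ℕ | ∃ u, u ≤ z - 1 - (min ((z - 1) / (t * (s - 1))) (t - 1)) * (t * (s - 1)) ∧
              n = t * s + (t * (2 * s - 1)) * (min ((z - 1) / (t * (s - 1))) (t - 1)) + u}) +
         {n : ℕ | ∃ k l', k < s ∧ l' < t ∧ n = t * (s - 1 - k) + (t * (2 * s - 1)) * l'}) ∧
      i + t * (s - 1) + (t * (2 * s - 1)) * l ∉
        (({n : ℕ | ∃ l' w, l' < min ((z - 1) / (t * (s - 1))) (t - 1) ∧ w < t * (s - 1) ∧
              n = t * s + (t * (2 * s - 1)) * l' + w} ∪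
          {n : ℕ | ∃ u, u ≤ z - 1 - (min ((z - 1) / (t * (s - 1))) (t - 1)) * (t * (s - 1)) ∧
              n = t * s + (t * (2 * s - 1)) * (min ((z - 1) / (t * (s - 1))) (t - 1)) + u}) +
         {n : ℕ | ∃ r, r < z ∧ n = t * s + (t * (2 * s - 1)) * (t - 1) + r}) ∧
      i + t * (s - 1) + (t * (2 * s - 1)) * l ∉
        ({n : ℕ | ∃ r, r < z ∧ n = t * s + (t * (2 * s - 1)) * (t - 1) + r} +
         {n : ℕ | ∃ i' j, i' < t ∧ j < s ∧ n = i' + t * j}) := by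
  intro i l hi hl
  have hlt : ∀ n ∈ supportSB s t z, importantPower s t i l < n := fun n hn =>
    (importantPower_lt (by omega) hi hl).trans_le (le_of_mem_supportSB hn)
  refine ⟨importantPower_notMem_supportSA_add_supportCB hs hi hl,
    Set.notMem_add_of_lt_right hlt, ?_⟩
  change importantPower s t i l ∉ supportSB s t z + supportCA s t
  rw [add_comm]
  exact Set.notMem_add_of_lt_right hlt

/-- PolyDot-CMPC privacy conditions C1–C3 in the branch
z > ts−t (polynomials F_{A_1} and F_{B_1}), with
θ' = t·(2s−1) and p = min(⌊(z−1)/(t·(s−1))⌋, t−1). -/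
theorem polydot_conditions_large_z (s t z : ℕ) (hs : 2 ≤ s) (ht : 2 ≤ t)
    (hz : t * (s - 1) < z) :
    ∀ i l, i < t → l < t →
      i + t * (s - 1) + (t * (2 * s - 1)) * l ∉
        (({n : ℕ | ∃ l' w, l' < min ((z - 1) / (t * (s - 1))) (t - 1) ∧ w < t * (s - 1) ∧
              n = t * s + (t * (2 * s - 1)) * l' + w} ∪
          {n : ℕ | ∃ u, u ≤ z - 1 - (min ((z - 1) / (t * (s - 1))) (t - 1)) * (t * (s - 1)) ∧
              n = t * s + (t * (2 * s - 1)) * (min ((z - 1) / (t * (s - 1))) (t - 1)) + u}) +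
         {n : ℕ | ∃ k l', k < s ∧ l' < t ∧ n = t * (s - 1 - k) + (t * (2 * s - 1)) * l'}) ∧
      i + t * (s - 1) + (t * (2 * s - 1)) * l ∉
        (({n : ℕ | ∃ l' w, l' < min ((z - 1) / (t * (s - 1))) (t - 1) ∧ w < t * (s - 1) ∧
              n = t * s + (t * (2 * s - 1)) * l' + w} ∪
          {n : ℕ | ∃ u, u ≤ z - 1 - (min ((z - 1) / (t * (s - 1))) (t - 1)) * (t * (s - 1)) ∧
              n = t * s + (t * (2 * s - 1)) * (min ((z - 1) / (t * (s - 1))) (t - 1)) + u}) +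
         {n : ℕ | ∃ r, r < z ∧ n = t * s + (t * (2 * s - 1)) * (t - 1) + r}) ∧
      i + t * (s - 1) + (t * (2 * s - 1)) * l ∉
        ({n : ℕ | ∃ r, r < z ∧ n = t * s + (t * (2 * s - 1)) * (t - 1) + r} +
         {n : ℕ | ∃ i' j, i' < t ∧ j < s ∧ n = i' + t * j}) :=
  polydot_conditions_large_z_general s t z hs
end

section
/- Let t ≥ 2, s ≥ 1, and 1 ≤ λ ≤ z−1 be natural numbers, set θ = t·s + λ and q = min(⌊(z−1)/λ⌋, t−1). Define P_CA = {j + s·i : 0 ≤ j ≤ s−1, 0 ≤ i ≤ t−1}, P_CB = {(s−1−k) + θ·l : 0 ≤ k ≤ s−1, 0 ≤ l ≤ t−1}, P_SA = (⋃_{l=0}^{q−1} {t·s + θ·l + w : 0 ≤ w ≤ λ−1}) ∪ {t·s + θ·q + u : 0 ≤ u ≤ z−1−q·λ}, and P_SB = {t·s + θ·(t−1) + r : 0 ≤ r ≤ z−1}. Then for every 0 ≤ i ≤ t−1 and 0 ≤ l ≤ t−1, the important power (s−1) + s·i + θ·l belongs to none of the sumsets P_SB + P_CA, P_SA + P_CB,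 and P_SA + P_SB. -/
/-!
Write `θ = t * s + lam`. An important power `e = (s - 1) + s * i + θ * l` has "θ-digit" `l` and
remainder `(s - 1) + s * i < t * s`, so it lies below `t * s + θ * l ≤ t * s + θ * (t - 1)`, the
least element of `P_SB`; this rules out every sumset involving `P_SB`. Apart from elements that are
already at least `t * s + θ * (t - 1)`, `P_SA` consists of numbers `t * s + θ * l₁ + w` with
`w < lam`, and adding `(s - 1 - k) + θ * l₂ ∈ P_CB` gives a number that is either too large (if
`l ≤ l₁ + l₂`) or too small (if `l > l₁ + l₂`, since then `e ≥ (s - 1) + θ * (l₁ + l₂) + θ`) to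
equal `e`.
-/

open Pointwise

theorem Set.notMem_add_of_lt_of_mem_lowerBounds {α : Type*} [Add α] [Preorder α]
    [CanonicallyOrderedAdd α] {X Y : Set α} {c e : α} (hc : c ∈ lowerBounds X) (he : e < c) :
    e ∉ X + Y := by
  rintro ⟨x, hx, y, -, rfl⟩
  exact (he.trans_le ((hc hx).trans le_self_add)).false

namespace AGE

/- The paper's `P_SA`, `P_SB`, `P_CB` and important powers, with `θ = t * s + lam` and
`q = min ⌊(z - 1) / lam⌋ (t - 1)` written out. -/
def supportSA (s t z lam : ℕ) : Set ℕ :=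
  {n | ∃ l' w, l' < min ((z - 1) / lam) (t - 1) ∧ w < lam ∧
      n = t * s + (t * s + lam) * l' + w} ∪
    {n | ∃ u, u ≤ z - 1 - (min ((z - 1) / lam) (t - 1)) * lam ∧
      n = t * s + (t * s + lam) * (min ((z - 1) / lam) (t - 1)) + u}

def supportSB (s t z lam : ℕ) : Set ℕ :=
  {n | ∃ r, r < z ∧ n = t * s + (t * s + lam) * (t - 1) + r}

def supportCB (s t lam : ℕ) : Set ℕ :=
  {n | ∃ k l', k < s ∧ l' < t ∧ n = (s - 1 - k) + (t * s + lam) * l'}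

def importantPower (s t lam i l : ℕ) : ℕ :=
  (s - 1) + s * i + (t * s + lam) * l

section

variable {s t z lam i l : ℕ}

theorem importantPower_lt (hs : 1 ≤ s) (hi : i < t) {l' : ℕ} (hl : l ≤ l') :
    importantPower s t lam i l < t * s + (t * s + lam) * l' := by
  have hsi : s * (i + 1) ≤ t * s := by rw [mul_comm t]; exact Nat.mul_le_mul_left s hi
  have hθl : (t * s + lam) * l ≤ (t * s + lam) * l' := Nat.mul_le_mul_left _ hl
  unfold importantPower
  rw [mul_add_one] at hsi
  omega

theorem mem_lowerBounds_supportSB :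
    t * s + (t * s + lam) * (t - 1) ∈ lowerBounds (supportSB s t z lam) := by
  rintro _ ⟨r, -, rfl⟩
  exact Nat.le_add_right _ r

theorem le_or_exists_of_mem_supportSA (hlam : 1 ≤ lam) {n : ℕ} (hn : n ∈ supportSA s t z lam) :
    t * s + (t * s + lam) * (t - 1) ≤ n ∨
      ∃ l' w, w < lam ∧ n = t * s + (t * s + lam) * l' + w := by
  rcases hn with ⟨l', w, -, hw, rfl⟩ | ⟨u, hu, rfl⟩
  · exact .inr ⟨l', w, hw, rfl⟩
  rcases le_total ((z - 1) / lam) (t - 1) with hq | hq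
  · rw [min_eq_left hq] at hu ⊢
    have hrem : z - 1 - (z - 1) / lam * lam < lam := by
      rw [← Nat.mod_eq_sub_div_mul]
      exact Nat.mod_lt _ hlam
    exact .inr ⟨_, u, hu.trans_lt hrem, rfl⟩
  · rw [min_eq_right hq]
    exact .inl (Nat.le_add_right _ u)

theorem importantPower_ne_add (hs : 1 ≤ s) (hi : i < t) {l₁ l₂ w k : ℕ} (hw : w < lam) :
    importantPower s t lam i l ≠
      (t * s + (t * s + lam) * l₁ + w) + ((s - 1 - k) + (t * s + lam) * l₂) := by
  have hsplit (m : ℕ) : (t * s + lam) * (l₁ + l₂ + m) =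
      (t * s + lam) * l₁ + (t * s + lam) * l₂ + (t * s + lam) * m := by ring
  rcases le_or_gt l (l₁ + l₂) with hle | hgt
  · have hlt := importantPower_lt (lam := lam) hs hi hle
    rw [← add_zero (l₁ + l₂), hsplit] at hlt
    omega
  · have hθl : (t * s + lam) * (l₁ + l₂ + 1) ≤ (t * s + lam) * l := Nat.mul_le_mul_left _ hgt
    rw [hsplit, mul_one] at hθl
    unfold importantPower
    omega

theorem importantPower_notMem_supportSB_add (hs : 1 ≤ s) (hi : i < t) (hl : l < t)
    (Y : Set ℕ) : importantPower s t lam i l ∉ supportSB s t z lam + Y :=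
  Set.notMem_add_of_lt_of_mem_lowerBounds mem_lowerBounds_supportSB
    (importantPower_lt hs hi (Nat.le_sub_one_of_lt hl))

theorem importantPower_notMem_supportSA_add_supportCB (hs : 1 ≤ s) (hlam : 1 ≤ lam)
    (hi : i < t) (hl : l < t) :
    importantPower s t lam i l ∉ supportSA s t z lam + supportCB s t lam := by
  rintro ⟨x, hx, _, ⟨k, l₂, -, -, rfl⟩, hsum⟩
  dsimp only at hsum
  rcases le_or_exists_of_mem_supportSA hlam hx with hbig | ⟨l₁, w, hw, rfl⟩
  · have := importantPower_lt (lam := lam) hs hi (Nat.le_sub_one_of_lt hl)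
    omega
  · exact importantPower_ne_add hs hi hw hsum.symm

theorem importantPower_notMem_supportSA_add_supportSB (hs : 1 ≤ s) (hi : i < t) (hl : l < t) :
    importantPower s t lam i l ∉ supportSA s t z lam + supportSB s t z lam := by
  rw [add_comm]
  exact importantPower_notMem_supportSB_add hs hi hl _

end

end AGE

open AGE in
theorem age_conditions_lambda_lt_z_general (s t z lam : ℕ) (hs : 1 ≤ s)
    (hlam1 : 1 ≤ lam) :
    ∀ i l, i < t → l < t →
      (s - 1) + s * i + (t * s + lam) * l ∉
        ({n : ℕ | ∃ r, r < z ∧ n = t * s + (t * s + lam) * (t - 1) + r} +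
         {n : ℕ | ∃ j i', j < s ∧ i' < t ∧ n = j + s * i'}) ∧
      (s - 1) + s * i + (t * s + lam) * l ∉
        (({n : ℕ | ∃ l' w, l' < min ((z - 1) / lam) (t - 1) ∧ w < lam ∧
              n = t * s + (t * s + lam) * l' + w} ∪
          {n : ℕ | ∃ u, u ≤ z - 1 - (min ((z - 1) / lam) (t - 1)) * lam ∧
              n = t * s + (t * s + lam) * (min ((z - 1) / lam) (t - 1)) + u}) +
         {n : ℕ | ∃ k l', k < s ∧ l' < t ∧ n = (s - 1 - k) + (t * s + lam) * l'}) ∧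
      (s - 1) + s * i + (t * s + lam) * l ∉
        (({n : ℕ | ∃ l' w, l' < min ((z - 1) / lam) (t - 1) ∧ w < lam ∧
              n = t * s + (t * s + lam) * l' + w} ∪
          {n : ℕ | ∃ u, u ≤ z - 1 - (min ((z - 1) / lam) (t - 1)) * lam ∧
              n = t * s + (t * s + lam) * (min ((z - 1) / lam) (t - 1)) + u}) +
         {n : ℕ | ∃ r, r < z ∧ n = t * s + (t * s + lam) * (t - 1) + r}) := by
  intro i l hi hl
  exact ⟨importantPower_notMem_supportSB_add hs hi hl _,
    importantPower_notMem_supportSA_add_supportCB hs hlam1 hi hl,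
    importantPower_notMem_supportSA_add_supportSB hs hi hl⟩

/-- AGE-CMPC privacy conditions C4–C6 in the branch
0 < λ < z (secret polynomial S_{A_1}), with θ = t·s + λ and
q = min(⌊(z−1)/λ⌋, t−1). -/
theorem age_conditions_lambda_lt_z (s t z lam : ℕ) (ht : 2 ≤ t) (hs : 1 ≤ s)
    (hlam1 : 1 ≤ lam) (hlam2 : lam ≤ z - 1) :
    ∀ i l, i < t → l < t →
      (s - 1) + s * i + (t * s + lam) * l ∉
        ({n : ℕ | ∃ r, r < z ∧ n = t * s + (t * s + lam) * (t - 1) + r} +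
         {n : ℕ | ∃ j i', j < s ∧ i' < t ∧ n = j + s * i'}) ∧
      (s - 1) + s * i + (t * s + lam) * l ∉
        (({n : ℕ | ∃ l' w, l' < min ((z - 1) / lam) (t - 1) ∧ w < lam ∧
              n = t * s + (t * s + lam) * l' + w} ∪
          {n : ℕ | ∃ u, u ≤ z - 1 - (min ((z - 1) / lam) (t - 1)) * lam ∧
              n = t * s + (t * s + lam) * (min ((z - 1) / lam) (t - 1)) + u}) +
         {n : ℕ | ∃ k l', k < s ∧ l' < t ∧ n = (s - 1 - k) + (t * s + lam) * l'}) ∧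
      (s - 1) + s * i + (t * s + lam) * l ∉
        (({n : ℕ | ∃ l' w, l' < min ((z - 1) / lam) (t - 1) ∧ w < lam ∧
              n = t * s + (t * s + lam) * l' + w} ∪
          {n : ℕ | ∃ u, u ≤ z - 1 - (min ((z - 1) / lam) (t - 1)) * lam ∧
              n = t * s + (t * s + lam) * (min ((z - 1) / lam) (t - 1)) + u}) +
         {n : ℕ | ∃ r, r < z ∧ n = t * s + (t * s + lam) * (t - 1) + r}) :=
  age_conditions_lambda_lt_z_general s t z lam hs hlam1
end

section
/- Let s ≥ 1, t ≥ 1, z ≥ 1 and λ ≥ z be natural numbers and set θ = t·s + λ. Define P_CA = {j + s·i : 0 ≤ j ≤ s−1, 0 ≤ i ≤ t−1}, P_CB = {(s−1−k) + θ·l : 0 ≤ k ≤ s−1, 0 ≤ l ≤ t−1}, P_SA = {t·s + u : 0 ≤ u ≤ z−1}, and P_SB = {t·s + θ·(t−1) + r : 0 ≤ r ≤ z−1}. Then for every 0 ≤ i ≤ t−1 and 0 ≤ l ≤ t−1, the important power (s−1) + s·i + θ·l belongs to none of the sumsets P_SB + P_CA, P_SA + P_CB, and P_SA + P_SB. -/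
/-!
Write θ = t·s + λ. An important power is θ·l + e with offset e = (s−1) + s·i < t·s, so every
important power is smaller than t·s + θ·(t−1) = min P_SB; since P_SB is a summand of the sumsets
in C4 and C6, they miss all important powers. An element of P_SA + P_CB is θ·l' + x with
x = t·s + u + (s−1−k), and z ≤ λ gives e < x < e + θ: the two offsets are distinct and too close
to differ by a multiple of θ, which settles C5.
-/

open Pointwise

theorem Set.notMem_add_of_lt_of_forall_le_left {α : Type*} [AddCommMonoid α] [Preorder α]
    [CanonicallyOrderedAdd α] {A B : Set α} {n m : α} (hn : n < m) (hA : ∀ a ∈ A, m ≤ a) :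
    n ∉ A + B := by
  rintro ⟨a, ha, b, -, rfl⟩
  exact (hn.trans_le ((hA a ha).trans le_self_add)).false

theorem Set.notMem_add_of_lt_of_forall_le_right {α : Type*} [AddCommMonoid α] [Preorder α]
    [CanonicallyOrderedAdd α] {A B : Set α} {n m : α} (hn : n < m) (hB : ∀ b ∈ B, m ≤ b) :
    n ∉ A + B := by
  rw [add_comm]
  exact Set.notMem_add_of_lt_of_forall_le_left hn hB

theorem Nat.mul_add_ne_mul_add {θ a b e x : ℕ} (hex : e < x) (hxe : x < e + θ) :
    θ * a + e ≠ θ * b + x := by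
  intro h
  rcases le_or_gt a b with hab | hab
  · have := Nat.mul_le_mul_left θ hab
    omega
  · have := Nat.mul_le_mul_left θ (Nat.succ_le_of_lt hab)
    rw [Nat.mul_succ] at this
    omega

theorem Nat.sub_one_add_mul_lt_mul {s i t : ℕ} (hs : 1 ≤ s) (hi : i < t) :
    s - 1 + s * i < t * s := by
  have := Nat.mul_le_mul_left s (Nat.succ_le_of_lt hi)
  rw [Nat.mul_succ, Nat.mul_comm s t] at this
  omega

theorem age_conditions_lambda_ge_z_general (s t z lam : ℕ) (hs : 1 ≤ s)
    (hlam : z ≤ lam) :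
    ∀ i l, i < t → l < t →
      (s - 1) + s * i + (t * s + lam) * l ∉
        ({n : ℕ | ∃ r, r < z ∧ n = t * s + (t * s + lam) * (t - 1) + r} +
         {n : ℕ | ∃ j i', j < s ∧ i' < t ∧ n = j + s * i'}) ∧
      (s - 1) + s * i + (t * s + lam) * l ∉
        ({n : ℕ | ∃ u, u < z ∧ n = t * s + u} +
         {n : ℕ | ∃ k l', k < s ∧ l' < t ∧ n = (s - 1 - k) + (t * s + lam) * l'}) ∧
      (s - 1) + s * i + (t * s + lam) * l ∉
        ({n : ℕ | ∃ u, u < z ∧ n = t * s + u} +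
         {n : ℕ | ∃ r, r < z ∧ n = t * s + (t * s + lam) * (t - 1) + r}) := by
  intro i l hi hl
  have he := Nat.sub_one_add_mul_lt_mul hs hi
  have hθl := Nat.mul_le_mul_left (t * s + lam) (Nat.le_sub_one_of_lt hl)
  have hlt : s - 1 + s * i + (t * s + lam) * l < t * s + (t * s + lam) * (t - 1) := by omega
  refine ⟨?_, ?_, ?_⟩
  · exact Set.notMem_add_of_lt_of_forall_le_left hlt (by rintro _ ⟨r, -, rfl⟩; omega)
  · rintro ⟨_, ⟨u, hu, rfl⟩, _, ⟨k, l', hk, -, rfl⟩, h⟩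
    refine Nat.mul_add_ne_mul_add (θ := t * s + lam) (a := l) (b := l') (e := s - 1 + s * i)
      (x := t * s + u + (s - 1 - k)) (by omega) (by omega) ?_
    simp only at h
    omega
  · exact Set.notMem_add_of_lt_of_forall_le_right hlt (by rintro _ ⟨r, -, rfl⟩; omega)

/-- AGE-CMPC privacy conditions C4–C6 in the branch z ≤ λ
(secret polynomial S_{A_2}), with θ = t·s + λ. -/
theorem age_conditions_lambda_ge_z (s t z lam : ℕ) (hs : 1 ≤ s) (ht : 1 ≤ t)
    (hz : 1 ≤ z) (hlam : z ≤ lam) :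
    ∀ i l, i < t → l < t →
      (s - 1) + s * i + (t * s + lam) * l ∉
        ({n : ℕ | ∃ r, r < z ∧ n = t * s + (t * s + lam) * (t - 1) + r} +
         {n : ℕ | ∃ j i', j < s ∧ i' < t ∧ n = j + s * i'}) ∧
      (s - 1) + s * i + (t * s + lam) * l ∉
        ({n : ℕ | ∃ u, u < z ∧ n = t * s + u} +
         {n : ℕ | ∃ k l', k < s ∧ l' < t ∧ n = (s - 1 - k) + (t * s + lam) * l'}) ∧
      (s - 1) + s * i + (t * s + lam) * l ∉
        ({n : ℕ | ∃ u, u < z ∧ n = t * s + u} +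
         {n : ℕ | ∃ r, r < z ∧ n = t * s + (t * s + lam) * (t - 1) + r}) :=
  age_conditions_lambda_ge_z_general s t z lam hs hlam
end

section
/- Let s, t ≥ 2 and z > t·(s−1) be natural numbers, set θ' = t·(2s−1) and p = min(⌊(z−1)/(t·(s−1))⌋, t−1). Then the finite set P_SA = (⋃_{l=0}^{p−1} {t·s + θ'·l + w : 0 ≤ w ≤ t·(s−1)−1}) ∪ {t·s + θ'·p + u : 0 ≤ u ≤ z−1−p·t·(s−1)} has exactly z elements. -/
/-!
Write `m = t(s-1)` and `θ' = ts + m ≥ m`. The first part of `P_SA` consists of `p` blocks of `m`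
consecutive integers spaced `θ'` apart, so it has `p·m` elements, all below `ts + θ'p`; the second part
is the interval of length `z - p·m` starting there. Since `p ≤ ⌊(z-1)/m⌋`, `p·m ≤ z - 1`, and the two
counts add up to `z`.
-/

lemma Nat.mul_add_lt_mul_add_of_lt {θ l₁ l₂ w₁ : ℕ} (w₂ : ℕ) (hw : w₁ < θ) (hl : l₁ < l₂) :
    θ * l₁ + w₁ < θ * l₂ + w₂ :=
  calc θ * l₁ + w₁ < θ * (l₁ + 1) := by rw [Nat.mul_succ]; omega
    _ ≤ θ * l₂ := Nat.mul_le_mul_left θ hl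
    _ ≤ θ * l₂ + w₂ := Nat.le_add_right _ _

section Blocks

variable (a θ p m : ℕ)

lemma setOf_blocks_eq_image :
    {n : ℕ | ∃ l w, l < p ∧ w < m ∧ n = a + θ * l + w} =
      ↑((Finset.range p ×ˢ Finset.range m).image fun x => a + θ * x.1 + x.2) := by
  ext n
  simp [eq_comm, and_assoc]

lemma ncard_setOf_blocks (hmθ : m ≤ θ) :
    {n : ℕ | ∃ l w, l < p ∧ w < m ∧ n = a + θ * l + w}.ncard = p * m := by
  have hinj : Set.InjOn (fun x : ℕ × ℕ => a + θ * x.1 + x.2) ↑(Finset.range p ×ˢ Finset.range m) := by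
    rintro ⟨l₁, w₁⟩ h₁ ⟨l₂, w₂⟩ h₂ heq
    simp only [Finset.coe_product, Finset.coe_range, Set.mem_prod, Set.mem_Iio] at h₁ h₂
    simp only [add_assoc, Nat.add_left_cancel_iff] at heq
    rcases lt_trichotomy l₁ l₂ with hl | rfl | hl
    · exact absurd heq (Nat.mul_add_lt_mul_add_of_lt w₂ (by omega) hl).ne
    · simp_all
    · exact absurd heq (Nat.mul_add_lt_mul_add_of_lt w₁ (by omega) hl).ne'
  rw [setOf_blocks_eq_image, Set.ncard_coe_finset, Finset.card_image_of_injOn hinj,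
    Finset.card_product, Finset.card_range, Finset.card_range]

lemma disjoint_setOf_blocks_setOf_tail (hmθ : m ≤ θ) (k : ℕ) :
    Disjoint {n : ℕ | ∃ l w, l < p ∧ w < m ∧ n = a + θ * l + w}
      {n : ℕ | ∃ u, u ≤ k ∧ n = a + θ * p + u} := by
  rw [Set.disjoint_left]
  rintro _ ⟨l, w, hl, hw, rfl⟩ ⟨u, -, heq⟩
  have := Nat.mul_add_lt_mul_add_of_lt u (hw.trans_le hmθ) hl
  omega

lemma setOf_add_le_eq_Icc (b k : ℕ) : {n : ℕ | ∃ u, u ≤ k ∧ n = b + u} = Set.Icc b (b + k) := by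
  ext n
  simp only [Set.mem_ofPred_eq, Set.mem_Icc]
  exact ⟨by rintro ⟨u, hu, rfl⟩; omega, fun h => ⟨n - b, by omega, by omega⟩⟩

lemma ncard_setOf_add_le (b k : ℕ) : {n : ℕ | ∃ u, u ≤ k ∧ n = b + u}.ncard = k + 1 := by
  rw [setOf_add_le_eq_Icc, Set.ncard_eq_toFinset_card', Set.toFinset_Icc, Nat.card_Icc]
  omega

lemma ncard_setOf_blocks_union_tail (hmθ : m ≤ θ) (k : ℕ) :
    ({n : ℕ | ∃ l w, l < p ∧ w < m ∧ n = a + θ * l + w} ∪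
      {n : ℕ | ∃ u, u ≤ k ∧ n = a + θ * p + u}).ncard = p * m + (k + 1) := by
  rw [Set.ncard_union_eq (disjoint_setOf_blocks_setOf_tail a θ p m hmθ k)
      (setOf_blocks_eq_image a θ p m ▸ Finset.finite_toSet _)
      (setOf_add_le_eq_Icc _ k ▸ Set.finite_Icc _ _),
    ncard_setOf_blocks a θ p m hmθ, ncard_setOf_add_le]

end Blocks

theorem polydot_PSA_card_general (s t z : ℕ)
    (hz : t * (s - 1) < z) :
    ({n : ℕ | ∃ l w, l < min ((z - 1) / (t * (s - 1))) (t - 1) ∧ w < t * (s - 1) ∧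
        n = t * s + (t * (2 * s - 1)) * l + w} ∪
     {n : ℕ | ∃ u, u ≤ z - 1 - (min ((z - 1) / (t * (s - 1))) (t - 1)) * (t * (s - 1)) ∧
        n = t * s + (t * (2 * s - 1)) * (min ((z - 1) / (t * (s - 1))) (t - 1)) + u}).ncard
      = z := by
  set m := t * (s - 1)
  set p := min ((z - 1) / m) (t - 1)
  have hmθ : m ≤ t * (2 * s - 1) := Nat.mul_le_mul_left t (by omega)
  have hpm : p * m ≤ z - 1 :=
    (Nat.mul_le_mul_right m (min_le_left _ _)).trans (Nat.div_mul_le_self _ _)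
  rw [ncard_setOf_blocks_union_tail _ _ _ _ hmθ]
  omega

/-- For s, t ≥ 2 and z > t·(s−1), with θ' = t·(2s−1) and
p = min(⌊(z−1)/(t·(s−1))⌋, t−1), the support
P_SA = (⋃_{l<p} {ts + θ'·l + w : w < t(s−1)}) ∪ {ts + θ'·p + u : u ≤ z−1−p·t·(s−1)}
has exactly z elements. -/
theorem polydot_PSA_card (s t z : ℕ) (hs : 2 ≤ s) (ht : 2 ≤ t)
    (hz : t * (s - 1) < z) :
    ({n : ℕ | ∃ l w, l < min ((z - 1) / (t * (s - 1))) (t - 1) ∧ w < t * (s - 1) ∧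
        n = t * s + (t * (2 * s - 1)) * l + w} ∪
     {n : ℕ | ∃ u, u ≤ z - 1 - (min ((z - 1) / (t * (s - 1))) (t - 1)) * (t * (s - 1)) ∧
        n = t * s + (t * (2 * s - 1)) * (min ((z - 1) / (t * (s - 1))) (t - 1)) + u}).ncard
      = z :=
  polydot_PSA_card_general s t z hz
end

section
/- Let s ≥ 1 and t ≥ 1 be natural numbers and θ' = t·(2s−1). Then the sumset {i + t·j : 0 ≤ i ≤ t−1, 0 ≤ j ≤ s−1} + {t·q + θ'·l : 0 ≤ q ≤ s−1, 0 ≤ l ≤ t−1} equals the interval {0, 1, …, t·θ' − 1} of natural numbers. -/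
open Pointwise

/-!
Both supports are sums of "digit sets": `P_CA = [0, t) + t·[0, s)` and
`P_CB = t·[0, s) + θ'·[0, t)`. Since `[0, s) + [0, s) = [0, 2s − 1)`, the sumset is
`[0, t) + t·[0, 2s − 1) + θ'·[0, t)`, and two mixed-radix decompositions (radix `t`, then
radix `θ' = t(2s − 1)`) show that this is exactly `[0, t·θ')`.
-/

namespace Nat

theorem Iio_add_image_mul_Iio (a b : ℕ) :
    Set.Iio a + (a * ·) '' Set.Iio b = Set.Iio (a * b) := by
  ext n
  simp only [Set.mem_add, Set.mem_image, Set.mem_Iio]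
  constructor
  · rintro ⟨i, hi, _, ⟨m, hm, rfl⟩, rfl⟩
    calc i + a * m < a * (m + 1) := by rw [Nat.mul_succ]; omega
      _ ≤ a * b := Nat.mul_le_mul_left a hm
  · intro hn
    have ha : 0 < a := Nat.pos_of_mul_pos_right (Nat.zero_lt_of_lt hn)
    exact ⟨n % a, n.mod_lt ha, _, ⟨n / a, Nat.div_lt_of_lt_mul hn, rfl⟩, n.mod_add_div a⟩

theorem Iio_add_Iio_self (s : ℕ) : Set.Iio s + Set.Iio s = Set.Iio (2 * s - 1) := by
  ext m
  simp only [Set.mem_add, Set.mem_Iio]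
  constructor
  · rintro ⟨j, hj, q, hq, rfl⟩
    omega
  · intro hm
    exact ⟨min m (s - 1), by omega, m - min m (s - 1), by omega, by omega⟩

end Nat

theorem polydot_coded_sumset_general (s t : ℕ) :
    ({n : ℕ | ∃ i j, i < t ∧ j < s ∧ n = i + t * j} +
     {n : ℕ | ∃ q l, q < s ∧ l < t ∧ n = t * q + (t * (2 * s - 1)) * l})
      = {n : ℕ | n < t * (t * (2 * s - 1))} := by
  set θ := t * (2 * s - 1)
  have hA : {n : ℕ | ∃ i j, i < t ∧ j < s ∧ n = i + t * j}
      = Set.Iio t + (t * ·) '' Set.Iio s := by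
    ext n; simp only [Set.mem_add, Set.mem_image, Set.mem_Iio, Set.mem_ofPred_eq]; grind
  have hB : {n : ℕ | ∃ q l, q < s ∧ l < t ∧ n = t * q + θ * l}
      = (t * ·) '' Set.Iio s + (θ * ·) '' Set.Iio t := by
    ext n; simp only [Set.mem_add, Set.mem_image, Set.mem_Iio, Set.mem_ofPred_eq]; grind
  have hmul : (t * ·) '' (Set.Iio s + Set.Iio s) = (t * ·) '' Set.Iio s + (t * ·) '' Set.Iio s :=
    Set.image_add (AddMonoidHom.mulLeft t)
  rw [hA, hB, ← add_assoc, add_assoc (Set.Iio t), ← hmul, Nat.Iio_add_Iio_self,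
    Nat.Iio_add_image_mul_Iio, Nat.Iio_add_image_mul_Iio, mul_comm]
  rfl

/-- For s, t ≥ 1 and θ' = t·(2s−1), the sumset
P_CA + P_CB of the PolyDot coded supports equals {0, 1, …, t·θ' − 1}. -/
theorem polydot_coded_sumset (s t : ℕ) (hs : 1 ≤ s) (ht : 1 ≤ t) :
    ({n : ℕ | ∃ i j, i < t ∧ j < s ∧ n = i + t * j} +
     {n : ℕ | ∃ q l, q < s ∧ l < t ∧ n = t * q + (t * (2 * s - 1)) * l})
      = {n : ℕ | n < t * (t * (2 * s - 1))} :=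
  polydot_coded_sumset_general s t
end

section
/- Let s, t ≥ 2 be natural numbers and θ' = t·(2s−1). Define the subsets of ℕ: A = (⋃_{l'=0}^{t−2} {n : θ'·l' ≤ n ≤ (l'+1)·θ' − t·s}) ∪ {n : n ≥ (t−1)·θ'} and B = (⋃_{l''=0}^{t−2} {n : t·s + θ'·l'' ≤ n ≤ (l''+1)·θ' − t}) ∪ {n : n ≥ t·s + (t−1)·θ'}. Then A ∩ B = {n : n ≥ t·s + (t−1)·θ'}. -/
/-! With period `θ = t(2s−1)`, the `l`-th block of `A` is the window `[0, θ − ts]` of the `l`-th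
period and the `l`-th block of `B` is its window `[ts, θ − t]`. As `θ + t = 2ts`, we get
`θ − ts < ts`, so the first window ends before the second starts, and the second ends before the
next period begins; hence no block of `A` meets a block of `B`. A block of either set lies below
the tail of the other, and the tail of `B` lies inside the tail of `A`. -/

/-- `admissibleLow θ' (t * s) (t - 1)` is the set `A = P'(S_B(x))` of powers allowed by
condition C2, and `admissibleHigh θ' (t * s) t (t - 1)` the set `B = P''(S_B(x))` allowed by C3. -/
def admissibleLow (θ p m : ℕ) : Set ℕ :=
  {n | ∃ l, l < m ∧ θ * l ≤ n ∧ n ≤ (l + 1) * θ - p} ∪ {n | m * θ ≤ n}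

def admissibleHigh (θ p q m : ℕ) : Set ℕ :=
  {n | ∃ l, l < m ∧ p + θ * l ≤ n ∧ n ≤ (l + 1) * θ - q} ∪ {n | p + m * θ ≤ n}

lemma succ_mul_tsub_le (l θ p : ℕ) : (l + 1) * θ - p ≤ θ * l + (θ - p) := by
  rw [add_one_mul, mul_comm]
  exact add_tsub_le_assoc

lemma periodic_Icc_disjoint {θ x y u v a b : ℕ} (hyu : y < u) (hvx : v < θ + x) :
    Disjoint (Set.Icc (θ * a + x) (θ * a + y)) (Set.Icc (θ * b + u) (θ * b + v)) := by
  refine Set.disjoint_left.mpr fun n ⟨hxn, hny⟩ ⟨hun, hnv⟩ => ?_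
  rcases le_or_gt a b with hab | hba
  · have : θ * a ≤ θ * b := Nat.mul_le_mul_left θ hab
    omega
  · have : θ * (b + 1) ≤ θ * a := Nat.mul_le_mul_left θ hba
    rw [mul_add_one] at this
    omega

section Blocks

variable {θ p q l m n : ℕ}

lemma lowBlock_disjoint_highBlock {l' : ℕ} (hθp : θ < 2 * p) (hθ : 0 < θ) (hq : 0 < q)
    (hlow : θ * l ≤ n ∧ n ≤ (l + 1) * θ - p) (hhigh : p + θ * l' ≤ n ∧ n ≤ (l' + 1) * θ - q) :
    False := by
  have hwindows := periodic_Icc_disjoint (θ := θ) (x := 0) (y := θ - p) (u := p) (v := θ - q)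
    (a := l) (b := l') (by omega) (by omega)
  exact Set.disjoint_left.mp hwindows ⟨by omega, hlow.2.trans (succ_mul_tsub_le l θ p)⟩
    ⟨by omega, hhigh.2.trans (succ_mul_tsub_le l' θ q)⟩

lemma lowBlock_lt_highTail (hp : 0 < p) (hl : l < m) (hlow : n ≤ (l + 1) * θ - p) :
    n < p + m * θ := by
  have : (l + 1) * θ ≤ m * θ := Nat.mul_le_mul_right θ hl
  omega

lemma highBlock_lt_lowTail (hθ : 0 < θ) (hq : 0 < q) (hl : l < m)
    (hhigh : n ≤ (l + 1) * θ - q) : n < m * θ := by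
  have : (l + 1) * θ ≤ m * θ := Nat.mul_le_mul_right θ hl
  have : 0 < (l + 1) * θ := Nat.mul_pos l.succ_pos hθ
  omega

end Blocks

theorem admissibleLow_inter_admissibleHigh {θ p q m : ℕ} (hθp : θ < 2 * p) (hθ : 0 < θ)
    (hq : 0 < q) : admissibleLow θ p m ∩ admissibleHigh θ p q m = {n | p + m * θ ≤ n} := by
  ext n
  refine ⟨?_, fun hn => ⟨Or.inr ((Nat.le_add_left _ _).trans hn), Or.inr hn⟩⟩
  rintro ⟨⟨l, hl, hlow⟩ | hlowTail, ⟨l', hl', hhigh⟩ | hhighTail⟩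
  · exact (lowBlock_disjoint_highBlock hθp hθ hq hlow hhigh).elim
  · exact absurd hhighTail (not_le.mpr (lowBlock_lt_highTail (by omega) hl hlow.2))
  · exact absurd hlowTail (not_le.mpr (highBlock_lt_lowTail hθ hq hl' hhigh.2))
  · exact hhighTail

/-- For s, t ≥ 2 and θ' = t·(2s−1), the intersection of the
admissible-power sets
A = (⋃_{l'<t−1} [θ'·l', (l'+1)·θ' − t·s]) ∪ [(t−1)·θ', ∞) and
B = (⋃_{l''<t−1} [t·s + θ'·l'', (l''+1)·θ' − t]) ∪ [t·s + (t−1)·θ', ∞)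
is exactly [t·s + (t−1)·θ', ∞). -/
theorem polydot_PSB_admissible_intersection (s t : ℕ) (hs : 2 ≤ s) (ht : 2 ≤ t) :
    (({n : ℕ | ∃ l', l' < t - 1 ∧ (t * (2 * s - 1)) * l' ≤ n ∧
          n ≤ (l' + 1) * (t * (2 * s - 1)) - t * s} ∪
      {n : ℕ | (t - 1) * (t * (2 * s - 1)) ≤ n}) ∩
     ({n : ℕ | ∃ l'', l'' < t - 1 ∧ t * s + (t * (2 * s - 1)) * l'' ≤ n ∧
          n ≤ (l'' + 1) * (t * (2 * s - 1)) - t} ∪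
      {n : ℕ | t * s + (t - 1) * (t * (2 * s - 1)) ≤ n}))
      = {n : ℕ | t * s + (t - 1) * (t * (2 * s - 1)) ≤ n} := by
  have hperiod : t * (2 * s - 1) + t = 2 * (t * s) := by
    rw [← Nat.mul_succ, Nat.succ_eq_add_one, Nat.sub_add_cancel (by omega), mul_left_comm]
  exact admissibleLow_inter_admissibleHigh (by omega) (Nat.mul_pos (by omega) (by omega))
    (by omega)
end

section
/- Let s, t ≥ 2 and z > t·(s−1) be natural numbers, set θ' = t·(2s−1) and p = min(⌊(z−1)/(t·(s−1))⌋, t−1). Define the subsets of ℤ: V₁ = {î − w + θ'·l̂ : −t ≤ î ≤ −1, 1 ≤ l̂ ≤ t−1, 0 ≤ w ≤ t·(s−1)−1} and V₂ = {î − u + θ'·l̃ : −t ≤ î ≤ −1, 1 ≤ l̃ ≤ t−1−p, 0 ≤ u ≤ z−1−p·t·(s−1)}. Then V₂ ⊆ V₁. -/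
/-!
Write `D = t(s-1)` and `p = min(⌊(z-1)/D⌋, t-1)`. An element of `V₂` has an index `l̃` with
`1 ≤ l̃ ≤ t-1-p`, so `p < t-1` and the minimum is the quotient `⌊(z-1)/D⌋`. Then
`z-1-pD` is the remainder of `z-1` modulo `D`, so the offset `u` already lies in the range
`0 ≤ u ≤ D-1` allowed for `w` in `V₁`; the same `î` and `l̃` work for `V₁`.
-/

/-- The quotient uses truncated subtraction in `ℕ`; at `z = 0` the left side is `-1`. -/
lemma Int.natCast_sub_one_sub_div_mul_le {D : ℕ} (hD : 0 < D) (z : ℕ) :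
    (z : ℤ) - 1 - ((z - 1) / D : ℕ) * (D : ℤ) ≤ D - 1 := by
  have hdiv : (((z - 1) % D : ℕ) : ℤ) + D * ((z - 1) / D : ℕ) = ((z - 1 : ℕ) : ℤ) := by
    exact_mod_cast Nat.mod_add_div (z - 1) D
  have hmod : (((z - 1) % D : ℕ) : ℤ) < D := by exact_mod_cast Nat.mod_lt _ hD
  have hz : (z : ℤ) - 1 ≤ ((z - 1 : ℕ) : ℤ) := by omega
  linarith

theorem polydot_V2_subset_V1_general (s t z : ℕ) (hs : 2 ≤ s) :
    {m : ℤ | ∃ i l u : ℤ, -(t : ℤ) ≤ i ∧ i ≤ -1 ∧ 1 ≤ l ∧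
        l ≤ (t : ℤ) - 1 - (min ((z - 1) / (t * (s - 1))) (t - 1) : ℕ) ∧
        0 ≤ u ∧
        u ≤ (z : ℤ) - 1 - (min ((z - 1) / (t * (s - 1))) (t - 1) : ℕ) * ((t : ℤ) * ((s : ℤ) - 1)) ∧
        m = i - u + ((t : ℤ) * (2 * (s : ℤ) - 1)) * l} ⊆
    {m : ℤ | ∃ i l w : ℤ, -(t : ℤ) ≤ i ∧ i ≤ -1 ∧ 1 ≤ l ∧ l ≤ (t : ℤ) - 1 ∧
        0 ≤ w ∧ w ≤ (t : ℤ) * ((s : ℤ) - 1) - 1 ∧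
        m = i - w + ((t : ℤ) * (2 * (s : ℤ) - 1)) * l} := by
  rintro m ⟨i, l, u, hi₁, hi₂, hl₁, hl₂, hu₁, hu₂, rfl⟩
  have hD : ((t * (s - 1) : ℕ) : ℤ) = t * ((s : ℤ) - 1) := by
    push_cast [Nat.cast_sub (by omega : 1 ≤ s)]; ring
  set q := (z - 1) / (t * (s - 1)) with hq
  have hp : min q (t - 1) = q := by omega
  have ht : 0 < t := by omega
  have hu : u ≤ (t : ℤ) * ((s : ℤ) - 1) - 1 := by
    have := Int.natCast_sub_one_sub_div_mul_le (D := t * (s - 1)) (Nat.mul_pos ht (by omega)) z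
    rw [hD, ← hq] at this
    rw [hp] at hu₂
    exact hu₂.trans this
  rw [hp] at hl₂
  exact ⟨i, l, u, hi₁, hi₂, hl₁, by linarith [Int.natCast_nonneg q], hu₁, hu, rfl⟩

/-- For s, t ≥ 2 and z > t·(s−1), with θ' = t·(2s−1) and
p = min(⌊(z−1)/(t·(s−1))⌋, t−1), the set
V₂ = {î − u + θ'·l̃ : −t ≤ î ≤ −1, 1 ≤ l̃ ≤ t−1−p, 0 ≤ u ≤ z−1−p·t·(s−1)}
is contained in
V₁ = {î − w + θ'·l̂ : −t ≤ î ≤ −1, 1 ≤ l̂ ≤ t−1, 0 ≤ w ≤ t·(s−1)−1}. -/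
theorem polydot_V2_subset_V1 (s t z : ℕ) (hs : 2 ≤ s) (ht : 2 ≤ t)
    (hz : t * (s - 1) < z) :
    {m : ℤ | ∃ i l u : ℤ, -(t : ℤ) ≤ i ∧ i ≤ -1 ∧ 1 ≤ l ∧
        l ≤ (t : ℤ) - 1 - (min ((z - 1) / (t * (s - 1))) (t - 1) : ℕ) ∧
        0 ≤ u ∧
        u ≤ (z : ℤ) - 1 - (min ((z - 1) / (t * (s - 1))) (t - 1) : ℕ) * ((t : ℤ) * ((s : ℤ) - 1)) ∧
        m = i - u + ((t : ℤ) * (2 * (s : ℤ) - 1)) * l} ⊆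
    {m : ℤ | ∃ i l w : ℤ, -(t : ℤ) ≤ i ∧ i ≤ -1 ∧ 1 ≤ l ∧ l ≤ (t : ℤ) - 1 ∧
        0 ≤ w ∧ w ≤ (t : ℤ) * ((s : ℤ) - 1) - 1 ∧
        m = i - w + ((t : ℤ) * (2 * (s : ℤ) - 1)) * l} :=
  polydot_V2_subset_V1_general s t z hs
end

section
/- Let s, t ≥ 2 and z be natural numbers with t·(s−1) < z ≤ t·s, and set θ' = t·(2s−1). Define P_CA = {i + t·j : 0 ≤ i ≤ t−1, 0 ≤ j ≤ s−1}, P_CB = {t·q + θ'·l : 0 ≤ q ≤ s−1, 0 ≤ l ≤ t−1}, P_SA = {t·s + w : 0 ≤ w ≤ t·(s−1)−1} ∪ {t·s + θ' + u : 0 ≤ u ≤ z−1−t·(s−1)}, and P_SB = {t·s + θ'·(t−1) + r : 0 ≤ r ≤ z−1}. Then the sumset (P_CA ∪ P_SA) + (P_CB ∪ P_SB) has cardinality 2·t·s + θ'·(t−1) + 3z − 1. -/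
/-!
Write `θ = t(2s−1) = ts + t(s−1)` and `z₀ = z − 1 − t(s−1)`. Then `P_CA ∪ P_SA` is
`[0, θ) ∪ [ts + θ, ts + θ + z₀]` and `P_SB = [b, b + z)` with `b = ts + θ(t−1)`. Since
`[0, θ) + {θl : l < t} = [0, θt)`, the sumset is the interval `[0, θt + ts + z)` together with
`[2ts + θt, 2ts + θt + z₀ + z − 1]`, and the two are disjoint exactly because `z ≤ ts`.
-/

open Pointwise Set

lemma setOf_add_mul_eq_Iio {c : ℕ} (d : ℕ) (hc : 0 < c) :
    {n : ℕ | ∃ i j, i < c ∧ j < d ∧ n = i + c * j} = Iio (c * d) := by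
  ext n
  simp only [mem_ofPred_eq, mem_Iio]
  constructor
  · rintro ⟨i, j, hi, hj, rfl⟩
    calc i + c * j < c * (j + 1) := by rw [mul_add_one]; omega
      _ ≤ c * d := Nat.mul_le_mul_left c hj
  · intro hn
    exact ⟨n % c, n / c, Nat.mod_lt n hc, Nat.div_lt_of_lt_mul hn, (Nat.mod_add_div n c).symm⟩

lemma setOf_const_add_lt (a b : ℕ) : {n : ℕ | ∃ w, w < b ∧ n = a + w} = Ico a (a + b) := by
  ext n
  simp only [mem_ofPred_eq, mem_Ico]
  exact ⟨by rintro ⟨w, hw, rfl⟩; omega, fun h ↦ ⟨n - a, by omega, by omega⟩⟩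

lemma setOf_const_add_le (a b : ℕ) : {n : ℕ | ∃ w, w ≤ b ∧ n = a + w} = Icc a (a + b) := by
  ext n
  simp only [mem_ofPred_eq, mem_Icc]
  exact ⟨by rintro ⟨w, hw, rfl⟩; omega, fun h ↦ ⟨n - a, by omega, by omega⟩⟩

lemma Iio_add_Icc {θ : ℕ} (b w : ℕ) (hθ : 0 < θ) : Iio θ + Icc b (b + w) = Ico b (b + θ + w) := by
  ext n
  simp only [mem_add, mem_Iio, mem_Icc, mem_Ico]
  refine ⟨by rintro ⟨x, hx, y, hy, rfl⟩; omega, fun hn ↦ ?_⟩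
  exact ⟨n - b - min (n - b) w, by omega, b + min (n - b) w, by omega, by omega⟩

lemma Iio_mul_subset_Iio_add {θ : ℕ} (t : ℕ) {P : Set ℕ} (hθ : 0 < θ) (hP : ∀ l < t, θ * l ∈ P) :
    Iio (θ * t) ⊆ Iio θ + P := by
  rw [← setOf_add_mul_eq_Iio t hθ]
  rintro _ ⟨i, l, hi, hl, rfl⟩
  exact ⟨i, hi, θ * l, hP l hl, rfl⟩

/-- `Iio θ + (P ∪ Icc b (b + w))` fills `Iio (b + θ + w)`; the missing last point is
`a + z₀ + m ∈ Icc a (a + z₀) + P`. -/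
lemma Iio_union_Icc_add_union_Icc {θ a z₀ b w m : ℕ} {P : Set ℕ} (hθ : 0 < θ)
    (hP : P ⊆ Iic m) (hm : m ∈ P) (hmb : m ≤ b + w) (hcover : Iio b ⊆ Iio θ + P)
    (htop : a + z₀ + m = b + θ + w) :
    (Iio θ ∪ Icc a (a + z₀)) + (P ∪ Icc b (b + w)) =
      Iio (b + θ + w + 1) ∪ Icc (a + b) (a + z₀ + (b + w)) := by
  have hlow : Iio θ + P ∪ Ico b (b + θ + w) ∪ (Icc a (a + z₀) + P) = Iio (b + θ + w + 1) := by
    refine subset_antisymm (union_subset (union_subset ?_ ?_) ?_) fun n hn ↦ ?_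
    · rintro _ ⟨x, hx, y, hy, rfl⟩
      have := hP hy
      simp only [mem_Iio, mem_Iic] at *
      omega
    · exact fun n hn ↦ by simp only [mem_Ico, mem_Iio] at *; omega
    · rintro _ ⟨x, hx, y, hy, rfl⟩
      have := hP hy
      simp only [mem_Icc, mem_Iio, mem_Iic] at *
      omega
    · simp only [mem_Iio] at hn
      rcases lt_or_ge n b with hnb | hbn
      · exact Or.inl (Or.inl (hcover hnb))
      rcases lt_or_eq_of_le (Nat.le_of_lt_succ hn) with hn' | rfl
      · exact Or.inl (Or.inr ⟨hbn, hn'⟩)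
      · exact Or.inr ⟨a + z₀, ⟨by omega, le_rfl⟩, m, hm, htop⟩
  rw [union_add, add_union, add_union, Iio_add_Icc b w hθ, Icc_add_Icc (by omega) (by omega),
    ← hlow]
  ac_rfl

lemma ncard_Iio_union_Icc {A B : ℕ} (C : ℕ) (hAB : A ≤ B) :
    (Iio A ∪ Icc B C).ncard = A + (C + 1 - B) := by
  have hdisj : Disjoint (Finset.Iio A) (Finset.Icc B C) :=
    Finset.disjoint_left.2 fun n hA hB ↦ by
      simp only [Finset.mem_Iio, Finset.mem_Icc] at hA hB; omega
  rw [← Finset.coe_Iio, ← Finset.coe_Icc, ← Finset.coe_union, ncard_coe_finset,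
    Finset.card_union_of_disjoint hdisj, Nat.card_Iio, Nat.card_Icc]

theorem polydot_workers_psi2_general (s t z : ℕ)
    (hz1 : t * (s - 1) < z) (hz2 : z ≤ t * s) :
    (({n : ℕ | ∃ i j, i < t ∧ j < s ∧ n = i + t * j} ∪
      ({n : ℕ | ∃ w, w < t * (s - 1) ∧ n = t * s + w} ∪
       {n : ℕ | ∃ u, u ≤ z - 1 - t * (s - 1) ∧
          n = t * s + t * (2 * s - 1) + u})) +
     ({n : ℕ | ∃ q l, q < s ∧ l < t ∧ n = t * q + (t * (2 * s - 1)) * l} ∪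
      {n : ℕ | ∃ r, r < z ∧ n = t * s + (t * (2 * s - 1)) * (t - 1) + r})).ncard
      = 2 * (t * s) + (t * (2 * s - 1)) * (t - 1) + 3 * z - 1 := by
  have ht : 0 < t := Nat.pos_of_ne_zero (by rintro rfl; omega)
  have hs : 0 < s := Nat.pos_of_ne_zero (by rintro rfl; omega)
  have hθ : t * (2 * s - 1) = t * s + t * (s - 1) := by rw [← mul_add]; congr 1; omega
  have hθt : t * (2 * s - 1) * (t - 1) + t * (2 * s - 1) = t * (2 * s - 1) * t := by
    rw [← mul_add_one]; congr 1; omega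
  set θ := t * (2 * s - 1)
  set P := {n : ℕ | ∃ q l, q < s ∧ l < t ∧ n = t * q + θ * l}
  have hA : {n : ℕ | ∃ i j, i < t ∧ j < s ∧ n = i + t * j} ∪
      ({n : ℕ | ∃ w, w < t * (s - 1) ∧ n = t * s + w} ∪
       {n : ℕ | ∃ u, u ≤ z - 1 - t * (s - 1) ∧ n = t * s + θ + u}) =
      Iio θ ∪ Icc (t * s + θ) (t * s + θ + (z - 1 - t * (s - 1))) := by
    rw [setOf_add_mul_eq_Iio s ht, setOf_const_add_lt, setOf_const_add_le, ← union_assoc,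
      Iio_union_Ico_eq_Iio (Nat.le_add_right _ _), ← hθ]
  have hB : {n : ℕ | ∃ r, r < z ∧ n = t * s + θ * (t - 1) + r} =
      Icc (t * s + θ * (t - 1)) (t * s + θ * (t - 1) + (z - 1)) := by
    simp_rw [Nat.lt_iff_le_pred (show 0 < z by omega)]
    exact setOf_const_add_le _ _
  have hP_le : P ⊆ Iic (t * (s - 1) + θ * (t - 1)) := by
    rintro _ ⟨q, l, hq, hl, rfl⟩
    exact add_le_add (Nat.mul_le_mul_left t (by omega)) (Nat.mul_le_mul_left θ (by omega))
  have hcover : Iio (t * s + θ * (t - 1)) ⊆ Iio θ + P :=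
    (Iio_subset_Iio (by omega)).trans <|
      Iio_mul_subset_Iio_add t (by omega) fun l hl ↦ ⟨0, l, hs, hl, by rw [mul_zero, zero_add]⟩
  rw [hA, hB, Iio_union_Icc_add_union_Icc (by omega) hP_le ⟨s - 1, t - 1, by omega, by omega, rfl⟩
    (by omega) hcover (by omega), ncard_Iio_union_Icc _ (by omega)]
  omega

/-- PolyDot-CMPC worker count in the region ts−t < z ≤ ts
(where p = 1): |(P_CA ∪ P_SA) + (P_CB ∪ P_SB)| = 2ts + θ'·(t−1) + 3z − 1 = ψ₂,
with θ' = t·(2s−1). -/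
theorem polydot_workers_psi2 (s t z : ℕ) (hs : 2 ≤ s) (ht : 2 ≤ t)
    (hz1 : t * (s - 1) < z) (hz2 : z ≤ t * s) :
    (({n : ℕ | ∃ i j, i < t ∧ j < s ∧ n = i + t * j} ∪
      ({n : ℕ | ∃ w, w < t * (s - 1) ∧ n = t * s + w} ∪
       {n : ℕ | ∃ u, u ≤ z - 1 - t * (s - 1) ∧
          n = t * s + t * (2 * s - 1) + u})) +
     ({n : ℕ | ∃ q l, q < s ∧ l < t ∧ n = t * q + (t * (2 * s - 1)) * l} ∪
      {n : ℕ | ∃ r, r < z ∧ n = t * s + (t * (2 * s - 1)) * (t - 1) + r})).ncard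
      = 2 * (t * s) + (t * (2 * s - 1)) * (t - 1) + 3 * z - 1 :=
  polydot_workers_psi2_general s t z hz1 hz2
end

section
/- Let s, t ≥ 2 and z be natural numbers with t·(s−2) < z ≤ t·(s−1), and set θ' = t·(2s−1). Define P_CA = {i + t·j : 0 ≤ i ≤ t−1, 0 ≤ j ≤ s−1}, P_CB = {t·q + θ'·l : 0 ≤ q ≤ s−1, 0 ≤ l ≤ t−1}, P_SA = {t·s + u : 0 ≤ u ≤ z−1}, and P_SB = {t·s + θ'·(t−1) + r : 0 ≤ r ≤ z−1}. Then the sumset (P_CA ∪ P_SA) + (P_CB ∪ P_SB) has cardinality 2·t·s + θ'·(t−1) + 2z − 1. -/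
open Pointwise

open Set

/-!
`P_CA ∪ P_SA` is the interval `[0, ts + z)`, and `P_CB` is the sumset of the progressions
`t·[0, s)` and `θ'·[0, t)`. Adding an interval of length `R` to a progression of step at most `R`
gives again an interval; the steps `t` and `θ' = ts + t(s - 1)` qualify in turn, and `P_SB`, an
interval starting `t` past the largest element of `P_CB`, extends the result to `[0, ψ₃)`.
-/

namespace Nat

theorem Iio_add_image_mul_Iio_s12 {R d k : ℕ} (hk : 0 < k) (hd : d ≤ R) :
    Iio R + (d * ·) '' Iio k = Iio (d * (k - 1) + R) := by
  ext n
  simp only [mem_add, mem_image, mem_Iio]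
  constructor
  · rintro ⟨r, hr, _, ⟨l, hl, rfl⟩, rfl⟩
    have : d * l ≤ d * (k - 1) := Nat.mul_le_mul_left d (by omega)
    omega
  · intro hn
    by_cases hq : n / d ≤ k - 1
    · refine ⟨n % d, ?_, _, ⟨n / d, by omega, rfl⟩, Nat.mod_add_div n d⟩
      rcases d.eq_zero_or_pos with rfl | hd0
      · simpa using hn
      · exact (Nat.mod_lt n hd0).trans_le hd
    · have : d * (k - 1) ≤ n :=
        (Nat.mul_le_mul_left d (by omega)).trans (Nat.mul_div_le n d)
      exact ⟨n - d * (k - 1), by omega, _, ⟨k - 1, by omega, rfl⟩, by omega⟩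

theorem Iio_union_singleton_add_Iio {X c Y : ℕ} (hc : c ≤ X) (hX : X ≤ c + Y) :
    Iio X ∪ ({c} + Iio Y) = Iio (c + Y) := by
  ext n
  simp only [mem_union, singleton_add, mem_image, mem_Iio]
  constructor
  · rintro (h | ⟨y, hy, rfl⟩) <;> omega
  · intro hn
    by_cases h : n < X
    · exact Or.inl h
    · exact Or.inr ⟨n - c, by omega, by omega⟩

theorem Iio_add_Iio {a b : ℕ} (ha : 0 < a) (hb : 0 < b) : Iio a + Iio b = Iio (a + b - 1) := by
  have h := Iio_add_image_mul_Iio_s12 (R := a) (d := 1) hb ha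
  rw [image_congr (fun x _ => one_mul x), image_id'] at h
  rw [h]; congr 1; omega

end Nat

theorem polydot_workers_psi3_general (s t z : ℕ) (hs : 2 ≤ s) (ht : 2 ≤ t)
    (hz1 : t * (s - 2) < z) :
    (({n : ℕ | ∃ i j, i < t ∧ j < s ∧ n = i + t * j} ∪
      {n : ℕ | ∃ u, u < z ∧ n = t * s + u}) +
     ({n : ℕ | ∃ q l, q < s ∧ l < t ∧ n = t * q + (t * (2 * s - 1)) * l} ∪
      {n : ℕ | ∃ r, r < z ∧ n = t * s + (t * (2 * s - 1)) * (t - 1) + r})).ncard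
      = 2 * (t * s) + (t * (2 * s - 1)) * (t - 1) + 2 * z - 1 := by
  set d := t * (2 * s - 1)
  set c := t * s + d * (t - 1)
  have hts : t * (s - 1) + t = t * s := by
    rw [← Nat.mul_succ]; congr 1; omega
  have hd : d = t * s + t * (s - 1) := by
    rw [← Nat.mul_add]; exact congrArg (t * ·) (by omega)
  have hCA : {n : ℕ | ∃ i j, i < t ∧ j < s ∧ n = i + t * j} = Iio t + (t * ·) '' Iio s := by
    ext n; simp [mem_add, eq_comm]
  have hSA : {n : ℕ | ∃ u, u < z ∧ n = t * s + u} = {t * s} + Iio z := by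
    ext n; simp [singleton_add, eq_comm]
  have hCB : {n : ℕ | ∃ q l, q < s ∧ l < t ∧ n = t * q + d * l} =
      (t * ·) '' Iio s + (d * ·) '' Iio t := by
    ext n; simp [mem_add, eq_comm]
  have hSB : {n : ℕ | ∃ r, r < z ∧ n = c + r} = {c} + Iio z := by
    ext n; simp [singleton_add, eq_comm]
  have hA : Iio t + (t * ·) '' Iio s ∪ ({t * s} + Iio z) = Iio (t * s + z) := by
    rw [Nat.Iio_add_image_mul_Iio_s12 (by omega) le_rfl, hts,
      Nat.Iio_union_singleton_add_Iio le_rfl (by omega)]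
  have hACB : Iio (t * s + z) + ((t * ·) '' Iio s + (d * ·) '' Iio t) =
      Iio (d * (t - 1) + (t * (s - 1) + (t * s + z))) := by
    rw [← add_assoc, Nat.Iio_add_image_mul_Iio_s12 (by omega) (by omega),
      Nat.Iio_add_image_mul_Iio_s12 (by omega) (by omega)]
  have hASB : Iio (t * s + z) + ({c} + Iio z) = {c} + Iio (t * s + z + z - 1) := by
    rw [add_left_comm, Nat.Iio_add_Iio (by omega) (by omega)]
  rw [hCA, hSA, hCB, hSB, hA, add_union, hACB, hASB,
    Nat.Iio_union_singleton_add_Iio (by omega) (by omega), ncard_Iio_nat]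
  omega

/-- PolyDot-CMPC worker count in the region ts−2t < z ≤ ts−t:
|(P_CA ∪ P_SA) + (P_CB ∪ P_SB)| = 2ts + θ'·(t−1) + 2z − 1 = ψ₃,
with θ' = t·(2s−1). -/
theorem polydot_workers_psi3 (s t z : ℕ) (hs : 2 ≤ s) (ht : 2 ≤ t)
    (hz1 : t * (s - 2) < z) (hz2 : z ≤ t * (s - 1)) :
    (({n : ℕ | ∃ i j, i < t ∧ j < s ∧ n = i + t * j} ∪
      {n : ℕ | ∃ u, u < z ∧ n = t * s + u}) +
     ({n : ℕ | ∃ q l, q < s ∧ l < t ∧ n = t * q + (t * (2 * s - 1)) * l} ∪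
      {n : ℕ | ∃ r, r < z ∧ n = t * s + (t * (2 * s - 1)) * (t - 1) + r})).ncard
      = 2 * (t * s) + (t * (2 * s - 1)) * (t - 1) + 2 * z - 1 :=
  polydot_workers_psi3_general s t z hs ht hz1
end

section
/- Let s ≥ 1, t ≥ 1, z ≥ 1 and 1 ≤ λ < z be natural numbers and θ = t·s + λ. Then the union (⋃_{l=0}^{t−1} {n : θ·l ≤ n ≤ θ·l + t·s + s − 2}) ∪ (⋃_{l'=0}^{t−2} {n : t·s + θ·l' ≤ n ≤ t·s + θ·l' + λ + s − 2}) ∪ {n : t·s + θ·(t−1) ≤ n ≤ 2·t·s + θ·(t−1) + z − 2} equals the interval {0, 1, …, 2·t·s + θ·(t−1) + z − 2}. -/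
/-- Gap-filling identity in the AGE-CMPC worker-count analysis
(0 < λ < z, θ = t·s + λ):
D₁ ∪ D̂'₃ ∪ D₂ = {0, 1, …, 2ts + θ(t−1) + z − 2}. -/
theorem age_gap_filling (s t z lam : ℕ) (hs : 1 ≤ s) (ht : 1 ≤ t)
    (hz : 1 ≤ z) (hlam1 : 1 ≤ lam) (hlam2 : lam < z) :
    ({n : ℕ | ∃ l, l < t ∧ (t * s + lam) * l ≤ n ∧
        n ≤ (t * s + lam) * l + t * s + s - 2} ∪
     {n : ℕ | ∃ l', l' < t - 1 ∧ t * s + (t * s + lam) * l' ≤ n ∧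
        n ≤ t * s + (t * s + lam) * l' + lam + s - 2} ∪
     {n : ℕ | t * s + (t * s + lam) * (t - 1) ≤ n ∧
        n ≤ 2 * (t * s) + (t * s + lam) * (t - 1) + z - 2})
      = {n : ℕ | n ≤ 2 * (t * s) + (t * s + lam) * (t - 1) + z - 2} := by
  have hP : 1 ≤ t * s := Nat.mul_pos ht hs
  have hsP : s ≤ t * s := Nat.le_mul_of_pos_left s ht
  have hpos : 0 < t * s + lam := by omega
  ext n
  simp only [Set.mem_union, Set.mem_setOf_eq]
  constructor
  · rintro ((⟨l, hl, h1, h2⟩ | ⟨l, hl, h1, h2⟩) | ⟨h1, h2⟩)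
    · have hA : (t * s + lam) * l ≤ (t * s + lam) * (t - 1) :=
        Nat.mul_le_mul le_rfl (by omega)
      omega
    · have hA : (t * s + lam) * l ≤ (t * s + lam) * (t - 1) :=
        Nat.mul_le_mul le_rfl (by omega)
      omega
    · exact h2
  · intro hn
    by_cases hc : t * s + (t * s + lam) * (t - 1) ≤ n
    · exact Or.inr ⟨hc, hn⟩
    push_neg at hc
    have h1 : (t * s + lam) * (n / (t * s + lam)) ≤ n := Nat.mul_div_le n _
    have h2 : n < (t * s + lam) * (n / (t * s + lam)) + (t * s + lam) := by
      have hmod := Nat.div_add_mod n (t * s + lam)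
      have := Nat.mod_lt n hpos
      omega
    have hqt : n / (t * s + lam) < t := by
      by_contra hcon
      push_neg at hcon
      have : (t * s + lam) * t ≤ (t * s + lam) * (n / (t * s + lam)) :=
        Nat.mul_le_mul le_rfl hcon
      have ht1 : (t * s + lam) * (t - 1) + (t * s + lam) = (t * s + lam) * t := by
        rw [← Nat.mul_succ]
        congr 1
        omega
      omega
    by_cases hcase : n ≤ (t * s + lam) * (n / (t * s + lam)) + t * s + s - 2
    · exact Or.inl (Or.inl ⟨n / (t * s + lam), hqt, h1, hcase⟩)
    · push_neg at hcase
      have hqt1 : n / (t * s + lam) < t - 1 := by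
        by_contra hcon
        push_neg at hcon
        have : (t * s + lam) * (t - 1) ≤ (t * s + lam) * (n / (t * s + lam)) :=
          Nat.mul_le_mul le_rfl hcon
        omega
      exact Or.inl (Or.inr ⟨n / (t * s + lam), hqt1, by omega, by omega⟩)
end

section
/- Let s ≥ 1, t ≥ 2 and z > t·s be natural numbers, let 1 ≤ λ ≤ z−1, set θ = t·s + λ and q = min(⌊(z−1)/λ⌋, t−1). Define P_CA = {j + s·i : 0 ≤ j ≤ s−1, 0 ≤ i ≤ t−1}, P_CB = {(s−1−k) + θ·l : 0 ≤ k ≤ s−1, 0 ≤ l ≤ t−1}, P_SA = (⋃_{l=0}^{q−1} {t·s + θ·l + w : 0 ≤ w ≤ λ−1}) ∪ {t·s + θ·q + u : 0 ≤ u ≤ z−1−q·λ}, and P_SB = {t·s + θ·(t−1) + r : 0 ≤ r ≤ z−1}. Then the sumset (P_CA ∪ P_SA) + (P_CB ∪ P_SB) has cardinality (q+2)·t·s + θ·(t−1) + 2z − 1. -/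
/-!
Both unions lie below their maxima `a` and `b`, so the sumset lies in `[0, a + b]`; it is all of
it. Below `θ t`, write `n = θ d + r` with `r < θ`: then `r ∈ [0, θ) ⊆ P_CA ∪ P_SA` and
`θ d ∈ P_CB`. From `ts + θ (t - 1)` on, use the top run of `z` consecutive elements of `P_SB`:
the gaps of `P_CA ∪ P_SA` have length `ts < z`, so every `m ≤ a + z - 1` lies at most `z - 1`
above one of its elements.
-/

open Pointwise Set

def supportCA (s t : ℕ) : Set ℕ := {n | ∃ j i, j < s ∧ i < t ∧ n = j + s * i}

def supportCB (s t θ : ℕ) : Set ℕ := {n | ∃ k l, k < s ∧ l < t ∧ n = (s - 1 - k) + θ * l}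

-- `ts`, `θ` and `q` stand for `t s`, `t s + λ` and `min ⌊(z - 1) / λ⌋ (t - 1)`.
def supportSA (ts θ lam z q : ℕ) : Set ℕ :=
  {n | ∃ l w, l < q ∧ w < lam ∧ n = ts + θ * l + w} ∪
    {n | ∃ u, u ≤ z - 1 - q * lam ∧ n = ts + θ * q + u}

def supportSB (ts θ z t : ℕ) : Set ℕ := {n | ∃ r, r < z ∧ n = ts + θ * (t - 1) + r}

namespace Nat

theorem Iio_mul_subset_add {A B : Set ℕ} {θ t : ℕ} (hA : Iio θ ⊆ A) (hB : ∀ l < t, θ * l ∈ B) :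
    Iio (θ * t) ⊆ A + B := by
  intro n hn
  have hθ : 0 < θ := Nat.pos_of_mul_pos_right (Nat.zero_lt_of_lt hn)
  exact ⟨n % θ, hA (Nat.mod_lt _ hθ), θ * (n / θ),
    hB _ ((Nat.div_lt_iff_lt_mul hθ).2 (by rwa [mul_comm])), Nat.mod_add_div n θ⟩

theorem Icc_subset_add_of_forall_exists {A B : Set ℕ} {c w M : ℕ}
    (hA : ∀ m ≤ M, ∃ a ∈ A, a ≤ m ∧ m ≤ a + w) (hB : Icc c (c + w) ⊆ B) :
    Icc c (c + M) ⊆ A + B := by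
  rintro n ⟨hcn, hnM⟩
  obtain ⟨a, ha, ham, hma⟩ := hA (n - c) (by omega)
  exact ⟨a, ha, n - a, hB ⟨by omega, by omega⟩, Nat.add_sub_of_le (by omega)⟩

end Nat

theorem supportCA_eq_Iio (s t : ℕ) : supportCA s t = Iio (t * s) := by
  ext m
  constructor
  · rintro ⟨j, i, hj, hi, rfl⟩
    have : s * i + s ≤ t * s := by nlinarith
    simp only [mem_Iio]; omega
  · intro hm
    have hs : 0 < s := Nat.pos_of_mul_pos_left (Nat.zero_lt_of_lt hm)
    exact ⟨m % s, m / s, Nat.mod_lt _ hs, (Nat.div_lt_iff_lt_mul hs).2 hm,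
      (Nat.mod_add_div m s).symm⟩

section

variable {s t θ : ℕ}

theorem supportCB_subset_Iic : supportCB s t θ ⊆ Iic (s - 1 + θ * (t - 1)) := by
  rintro _ ⟨k, l, -, hl, rfl⟩
  have : θ * l ≤ θ * (t - 1) := Nat.mul_le_mul_left θ (by omega)
  simp only [mem_Iic]; omega

theorem mul_mem_supportCB (hs : 0 < s) {l : ℕ} (hl : l < t) : θ * l ∈ supportCB s t θ :=
  ⟨s - 1, l, by omega, hl, by simp⟩

theorem supportSB_eq_Ico (ts z : ℕ) :
    supportSB ts θ z t = Ico (ts + θ * (t - 1)) (ts + θ * (t - 1) + z) := by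
  ext n
  constructor
  · rintro ⟨r, hr, rfl⟩
    simp only [mem_Ico]; omega
  · rintro ⟨h₁, h₂⟩
    exact ⟨n - (ts + θ * (t - 1)), by omega, by omega⟩

end

section

variable {ts θ lam z q : ℕ}

theorem supportSA_subset_Iic (hlam : lam ≤ θ) :
    supportSA ts θ lam z q ⊆ Iic (ts + θ * q + (z - 1 - q * lam)) := by
  rintro _ (⟨l, w, hl, hw, rfl⟩ | ⟨u, hu, rfl⟩) <;> simp only [mem_Iic]
  · have : θ * l + θ ≤ θ * q := by rw [← mul_add_one]; exact Nat.mul_le_mul_left θ hl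
    omega
  · omega

theorem Icc_subset_supportSA :
    Icc (ts + θ * q) (ts + θ * q + (z - 1 - q * lam)) ⊆ supportSA ts θ lam z q := by
  rintro n ⟨h₁, h₂⟩
  exact Or.inr ⟨n - (ts + θ * q), by omega, by omega⟩

theorem mul_add_mem_supportSA {l r : ℕ} (hl : l < q) (hr₁ : ts ≤ r) (hr₂ : r < ts + lam) :
    (ts + lam) * l + r ∈ supportSA ts (ts + lam) lam z q :=
  Or.inl ⟨l, r - ts, hl, by omega, by omega⟩

theorem Iio_subset_union_supportSA (hq : 0 < q) :
    Iio (ts + lam) ⊆ Iio ts ∪ supportSA ts (ts + lam) lam z q := by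
  intro n hn
  by_cases hn' : n < ts
  · exact Or.inl hn'
  · simpa using Or.inr (mul_add_mem_supportSA (z := z) (l := 0) hq (not_lt.1 hn') hn)

theorem exists_mem_union_supportSA_near (hlam : 1 ≤ lam) (hts : ts ≤ z - 1)
    {m : ℕ} (hm : m ≤ ts + (ts + lam) * q + (z - 1 - q * lam) + (z - 1)) :
    ∃ a ∈ Iio ts ∪ supportSA ts (ts + lam) lam z q, a ≤ m ∧ m ≤ a + (z - 1) := by
  set θ := ts + lam
  by_cases hlast : ts + θ * q ≤ m
  · refine ⟨min m (ts + θ * q + (z - 1 - q * lam)), Or.inr (Icc_subset_supportSA ⟨?_, ?_⟩),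
      min_le_left _ _, by omega⟩ <;> omega
  have hdiv : θ * (m / θ) + m % θ = m := Nat.div_add_mod m θ
  have hmod : m % θ < θ := Nat.mod_lt _ (by omega)
  by_cases hr : ts ≤ m % θ
  · have hd : m / θ < q := Nat.lt_of_mul_lt_mul_left (a := θ) (by omega)
    exact ⟨m, Or.inr (hdiv ▸ mul_add_mem_supportSA hd hr hmod), le_rfl, by omega⟩
  cases hd : m / θ with
  | zero =>
    rw [hd, mul_zero] at hdiv
    exact ⟨m, Or.inl (show m < ts by omega), le_rfl, by omega⟩
  | succ d =>
    -- `m` lies in the gap `[θ (d + 1), θ (d + 1) + ts)`, just above the end of block `d`.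
    rw [hd, mul_add_one] at hdiv
    have hdq : d < q := Nat.lt_of_mul_lt_mul_left (a := θ) (by omega)
    exact ⟨θ * d + (θ - 1), Or.inr (mul_add_mem_supportSA hdq (by omega) (by omega)),
      by omega, by omega⟩

end

theorem supportA_add_supportB_eq_Iic {s t z lam q : ℕ} (hs : 0 < s) (ht : 0 < t)
    (hlam : 1 ≤ lam) (hq : 0 < q) (hz : t * s < z) :
    (supportCA s t ∪ supportSA (t * s) (t * s + lam) lam z q) +
        (supportCB s t (t * s + lam) ∪ supportSB (t * s) (t * s + lam) z t) =
      Iic (t * s + (t * s + lam) * q + (z - 1 - q * lam) +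
        (t * s + (t * s + lam) * (t - 1) + (z - 1))) := by
  have hθt : (t * s + lam) * t = (t * s + lam) * (t - 1) + (t * s + lam) := by
    rw [← mul_add_one, Nat.sub_one_add_one ht.ne']
  have hst : s ≤ t * s := Nat.le_mul_of_pos_left s ht
  rw [supportCA_eq_Iio]
  apply subset_antisymm
  · refine (add_subset_add (union_subset ?_ ?_) (union_subset ?_ ?_)).trans
      (Iic_add_Iic_subset _ _)
    · exact Iio_subset_Iic_self.trans (Iic_subset_Iic.2 (by omega))
    · exact supportSA_subset_Iic (by omega)
    · exact supportCB_subset_Iic.trans (Iic_subset_Iic.2 (by omega))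
    · rw [supportSB_eq_Ico]
      exact fun n hn => show n ≤ _ by simp only [mem_Ico] at hn; omega
  · intro n hn
    rw [mem_Iic] at hn
    by_cases hn' : n < (t * s + lam) * t
    · exact Nat.Iio_mul_subset_add (Iio_subset_union_supportSA hq)
        (fun l hl => Or.inl (mul_mem_supportCB hs hl)) hn'
    · refine Nat.Icc_subset_add_of_forall_exists (c := t * s + (t * s + lam) * (t - 1))
        (w := z - 1) (fun m hm => exists_mem_union_supportSA_near hlam (by omega) hm) ?_
        ⟨by omega, by omega⟩
      rw [supportSB_eq_Ico]
      exact fun n hn => Or.inr (by simp only [mem_Icc, mem_Ico] at hn ⊢; omega)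

/-- AGE-CMPC worker count in the region z > ts, 0 < λ < z
(θ = t·s + λ, q = min(⌊(z−1)/λ⌋, t−1)):
|(P_CA ∪ P_SA) + (P_CB ∪ P_SB)| = (q+2)·ts + θ(t−1) + 2z − 1 = Υ₄(λ). -/
theorem age_workers_upsilon4 (s t z lam : ℕ) (hs : 1 ≤ s) (ht : 2 ≤ t)
    (hz : t * s < z) (hlam1 : 1 ≤ lam) (hlam2 : lam ≤ z - 1) :
    (({n : ℕ | ∃ j i, j < s ∧ i < t ∧ n = j + s * i} ∪
      ({n : ℕ | ∃ l w, l < min ((z - 1) / lam) (t - 1) ∧ w < lam ∧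
          n = t * s + (t * s + lam) * l + w} ∪
       {n : ℕ | ∃ u, u ≤ z - 1 - (min ((z - 1) / lam) (t - 1)) * lam ∧
          n = t * s + (t * s + lam) * (min ((z - 1) / lam) (t - 1)) + u})) +
     ({n : ℕ | ∃ k l, k < s ∧ l < t ∧ n = (s - 1 - k) + (t * s + lam) * l} ∪
      {n : ℕ | ∃ r, r < z ∧ n = t * s + (t * s + lam) * (t - 1) + r})).ncard
      = (min ((z - 1) / lam) (t - 1) + 2) * (t * s) +
        (t * s + lam) * (t - 1) + 2 * z - 1 := by
  set q := min ((z - 1) / lam) (t - 1)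
  have hq : 0 < q := lt_min (Nat.div_pos hlam2 hlam1) (by omega)
  have hqz : q * lam ≤ z - 1 :=
    (Nat.mul_le_mul_right lam (min_le_left _ _)).trans (Nat.div_mul_le_self _ _)
  have h₁ : (t * s + lam) * q = q * (t * s) + q * lam := by ring
  have h₂ : (q + 2) * (t * s) = q * (t * s) + 2 * (t * s) := by ring
  calc _ = (Iic _).ncard := congrArg ncard (supportA_add_supportB_eq_Iic hs (by omega) hlam1 hq hz)
    _ = _ := by rw [ncard_Iic_nat]; omega
end

section
/- Let s ≥ 1, t ≥ 2, z ≥ 1 and λ be natural numbers with λ > z + s − 1, and set θ = t·s + λ. Define P_CA = {j + s·i : 0 ≤ j ≤ s−1, 0 ≤ i ≤ t−1}, P_CB = {(s−1−k) + θ·l : 0 ≤ k ≤ s−1, 0 ≤ l ≤ t−1}, P_SA = {t·s + u : 0 ≤ u ≤ z−1}, and P_SB = {t·s + θ·(t−1) + r : 0 ≤ r ≤ z−1}. Then the sumset (P_CA ∪ P_SA) + (P_CB ∪ P_SB) has cardinality 2·t·s + (t·s + z + s − 1)·(t−1) + 2z − 1. -/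
/-!
With `θ = ts + λ`, both factors are unions of intervals: `P_CA ∪ P_SA = [0, ts + z)` (base-`s`
digits), `P_CB = ⋃_{l < t} [θl, θl + s)` and `P_SB = [ts + θ(t-1), ts + θ(t-1) + z)`. Adding
`[0, N)` lengthens every interval by `N - 1`, so the sumset is made of `t - 1` blocks of length
`ts + z + s - 1 < θ`, which are therefore pairwise disjoint, followed by a last block in which the
two lengthened intervals overlap into one interval of length `2ts + 2z - 1`.
-/

open Pointwise Set

namespace Nat

theorem setOf_add_mul_eq_Iio (s t : ℕ) :
    {n : ℕ | ∃ j i, j < s ∧ i < t ∧ n = j + s * i} = Iio (s * t) := by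
  ext n
  constructor
  · rintro ⟨j, i, hj, hi, rfl⟩
    calc j + s * i < s * (i + 1) := by rw [mul_add_one]; omega
      _ ≤ s * t := Nat.mul_le_mul_left s hi
  · intro hn
    have hs : 0 < s := Nat.pos_of_mul_pos_right (lt_of_le_of_lt (Nat.zero_le n) hn)
    exact ⟨n % s, n / s, Nat.mod_lt n hs, Nat.div_lt_of_lt_mul hn, (Nat.mod_add_div n s).symm⟩

theorem setOf_add_eq_Ico (c z : ℕ) : {n : ℕ | ∃ r, r < z ∧ n = c + r} = Ico c (c + z) := by
  ext n
  simp only [mem_ofPred_eq, mem_Ico]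
  constructor
  · rintro ⟨r, hr, rfl⟩
    omega
  · intro hn
    exact ⟨n - c, by omega, by omega⟩

theorem setOf_sub_add_mul_eq_biUnion_Ico (s t θ : ℕ) :
    {n : ℕ | ∃ k l, k < s ∧ l < t ∧ n = (s - 1 - k) + θ * l} =
      ⋃ l < t, Ico (θ * l) (θ * l + s) := by
  ext n
  simp only [mem_ofPred_eq, mem_iUnion, mem_Ico, exists_prop]
  constructor
  · rintro ⟨k, l, hk, hl, rfl⟩
    exact ⟨l, hl, by omega, by omega⟩
  · rintro ⟨l, hl, hn⟩
    exact ⟨s - 1 - (n - θ * l), l, by omega, hl, by omega⟩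

theorem Iio_add_Ico_add {m k : ℕ} (hm : 0 < m) (hk : 0 < k) (a : ℕ) :
    Iio m + Ico a (a + k) = Ico a (a + (m + k - 1)) := by
  ext x
  simp only [mem_add, mem_Iio, mem_Ico]
  constructor
  · rintro ⟨y, hy, z, hz, rfl⟩
    omega
  · intro hx
    by_cases hxk : x < a + k
    · exact ⟨0, hm, x, ⟨hx.1, hxk⟩, zero_add x⟩
    · exact ⟨x - (a + k - 1), by omega, a + k - 1, by omega, by omega⟩

theorem ncard_union_Ico_of_subset_Iio {S : Set ℕ} {a : ℕ} (hS : S ⊆ Iio a) (m : ℕ) :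
    (S ∪ Ico a (a + m)).ncard = S.ncard + m := by
  have hdisj : Disjoint S (Ico a (a + m)) :=
    (Iio_disjoint_Ici le_rfl).mono hS Ico_subset_Ici_self
  rw [ncard_union_eq hdisj ((finite_Iio a).subset hS) (finite_Ico a (a + m))]
  simp

theorem biUnion_Ico_mul_subset_Iio {θ w : ℕ} (hw : w ≤ θ) (n : ℕ) :
    ⋃ l < n, Ico (θ * l) (θ * l + w) ⊆ Iio (θ * n) := by
  simp only [iUnion_subset_iff]
  intro l hl x hx
  have : θ * (l + 1) ≤ θ * n := Nat.mul_le_mul_left θ hl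
  rw [mem_Ico] at hx
  rw [mem_Iio]
  linarith [mul_add_one θ l]

theorem ncard_biUnion_Ico_mul {θ w : ℕ} (hw : w ≤ θ) (n : ℕ) :
    (⋃ l < n, Ico (θ * l) (θ * l + w)).ncard = n * w := by
  induction n with
  | zero => simp
  | succ n ih =>
    rw [biUnion_lt_succ, ncard_union_Ico_of_subset_Iio (biUnion_Ico_mul_subset_Iio hw n), ih,
      add_one_mul]

end Nat

/-- AGE-CMPC worker count for λ > z + s − 1 (θ = t·s + λ),
Case 2 of the Appendix H lemma:
|(P_CA ∪ P_SA) + (P_CB ∪ P_SB)| = 2ts + (ts+z+s−1)(t−1) + 2z − 1,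
independent of λ. -/
theorem age_workers_lambda_ge_z_case2 (s t z lam : ℕ) (hs : 1 ≤ s) (ht : 2 ≤ t)
    (hz : 1 ≤ z) (hlam : z + s - 1 < lam) :
    (({n : ℕ | ∃ j i, j < s ∧ i < t ∧ n = j + s * i} ∪
      {n : ℕ | ∃ u, u < z ∧ n = t * s + u}) +
     ({n : ℕ | ∃ k l, k < s ∧ l < t ∧ n = (s - 1 - k) + (t * s + lam) * l} ∪
      {n : ℕ | ∃ r, r < z ∧ n = t * s + (t * s + lam) * (t - 1) + r})).ncard
      = 2 * (t * s) + (t * s + z + s - 1) * (t - 1) + 2 * z - 1 := by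
  obtain ⟨n, rfl⟩ : ∃ n, t = n + 1 := ⟨t - 1, by omega⟩
  set θ := (n + 1) * s + lam
  have hN : 0 < (n + 1) * s + z := by positivity
  have hw : (n + 1) * s + z + s - 1 ≤ θ := by omega
  rw [Nat.setOf_add_mul_eq_Iio, Nat.setOf_add_eq_Ico, mul_comm s,
    Iio_union_Ico_eq_Iio le_self_add, Nat.setOf_sub_add_mul_eq_biUnion_Ico, Nat.setOf_add_eq_Ico,
    add_union, add_iUnion₂, Nat.add_sub_cancel]
  simp_rw [Nat.Iio_add_Ico_add hN hs, Nat.Iio_add_Ico_add hN hz]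
  have hlast : Ico (θ * n) (θ * n + ((n + 1) * s + z + s - 1)) ∪
      Ico ((n + 1) * s + θ * n) ((n + 1) * s + θ * n + ((n + 1) * s + z + z - 1)) =
      Ico (θ * n) (θ * n + (2 * ((n + 1) * s) + 2 * z - 1)) := by
    have hst : s ≤ (n + 1) * s := Nat.le_mul_of_pos_left s n.succ_pos
    ext x
    simp only [mem_union, mem_Ico]
    omega
  rw [biUnion_lt_succ, union_assoc, hlast,
    Nat.ncard_union_Ico_of_subset_Iio (Nat.biUnion_Ico_mul_subset_Iio hw n),
    Nat.ncard_biUnion_Ico_mul hw, mul_comm n]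
  omega
end
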